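/- arXiv:1904.04755 — 8 statements merged into one kernel-verified Lean document; each statement's English description precedes it below -/
import Mathlib

section
/- Let n ≥ 1 and fix ε > 0 with n·ε² ≥ 2. Then for any family of data-dependent hypothesis sets (H_S)_{S∈Z^m}, the following symmetrization inequality holds: P_{S~D^m}[ sup_{h∈H_S} R(h) − R̂_S(h) > ε ] ≤ 2·P_{S~D^m, T~D^n}[ sup_{h∈H_S} R̂_T(h) − R̂_S(h) > ε/2 ], where S and T are drawn independently. -/
/-!
Fix a bad sample `S` and a hypothesis `h ∈ H_S` with `R(h) - R̂_S(h) > ε`. A `[0, 1]`-valued loss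
has variance at most `1/4`, so by Chebyshev an independent sample `T` of size `n` has
`R̂_T(h) ≤ R(h) - ε/2` with probability at most `1/(nε²) ≤ 1/2`; on the complementary event
`R̂_T(h) - R̂_S(h) > ε/2`. Hence the `T`-section of the event on the right has measure at least
`1/2` over every bad `S`, and integrating over `S` gives the factor `2`.
-/

open MeasureTheory ProbabilityTheory Finset Set

/-- For `f = L h` this is the empirical risk `R̂_W(h)`. -/
noncomputable def empiricalMean {Z : Type*} {k : ℕ} (f : Z → ℝ) (W : Fin k → Z) : ℝ :=
  (k : ℝ)⁻¹ * ∑ i, f (W i)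

lemma empiricalMean_mem_Icc {Z : Type*} {k : ℕ} {f : Z → ℝ} (hf : ∀ z, f z ∈ Icc (0 : ℝ) 1)
    (W : Fin k → Z) : empiricalMean f W ∈ Icc (0 : ℝ) 1 := by
  have hsum : ∑ i, f (W i) ≤ k := by
    simpa using Finset.sum_le_sum fun i (_ : i ∈ Finset.univ) => (hf (W i)).2
  exact ⟨mul_nonneg (by positivity) (sum_nonneg fun i _ => (hf (W i)).1),
    inv_mul_le_one_of_le₀ hsum k.cast_nonneg⟩

namespace Real

variable {α : Type*} {s : Set α} {F : α → ℝ}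

lemma le_biSup (hF : BddAbove (range F)) {a : α} (ha : a ∈ s) : F a ≤ ⨆ b ∈ s, F b :=
  le_ciSup₂ (f := fun b (_ : b ∈ s) => F b)
    (hF.mono (iUnion_subset fun b => by rintro _ ⟨_, rfl⟩; exact mem_range_self b)) a ha

-- `0 ≤ ε` is needed because the junk value of an empty supremum in `ℝ` is `0`.
lemma exists_lt_of_lt_biSup {ε : ℝ} (hε : 0 ≤ ε) (h : ε < ⨆ a ∈ s, F a) : ∃ a ∈ s, ε < F a := by
  by_contra! hc
  exact h.not_ge (Real.iSup_le (fun a => Real.iSup_le (hc a) hε) hε)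

end Real

section Chebyshev

variable {Z : Type*} [MeasurableSpace Z] {D : Measure Z} [IsProbabilityMeasure D] {n : ℕ}

lemma measure_le_abs_empiricalMean_sub_integral_le (hn : n ≠ 0) {f : Z → ℝ} (hf : MemLp f 2 D)
    {t : ℝ} (ht : 0 < t) :
    (Measure.pi fun _ : Fin n => D) {T | t ≤ |empiricalMean f T - ∫ z, f z ∂D|}
      ≤ ENNReal.ofReal (Var[f; D] / (n * t ^ 2)) := by
  set ν := Measure.pi fun _ : Fin n => D
  have hcoord (i : Fin n) : MemLp (fun T : Fin n → Z => f (T i)) 2 ν :=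
    hf.comp_measurePreserving (measurePreserving_eval _ i)
  have hdef : empiricalMean f = fun T : Fin n → Z => (n : ℝ)⁻¹ * ∑ i, f (T i) := rfl
  have hX : MemLp (empiricalMean f) 2 ν := (memLp_finsetSum _ fun i _ => hcoord i).const_mul _
  have hmean : ν[empiricalMean f] = ∫ z, f z ∂D := by
    have hcomp (i : Fin n) : ∫ T, f (T i) ∂ν = ∫ z, f z ∂D :=
      integral_comp_eval (X := fun _ => Z) hf.aestronglyMeasurable
    rw [hdef, integral_const_mul,
      integral_finsetSum _ fun i _ => (hcoord i).integrable one_le_two]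
    simp only [hcomp, sum_const, card_univ, Fintype.card_fin, nsmul_eq_mul]
    field_simp
  have hvar : Var[empiricalMean f; ν] = Var[f; D] / n := by
    have hsum : (fun T : Fin n → Z => ∑ i, f (T i)) = ∑ i, fun T : Fin n → Z => f (T i) := by
      ext T; simp
    have hsum_var := variance_sum_pi (μ := fun _ : Fin n => D) (fun _ => hf)
    simp only [sum_const, card_univ, Fintype.card_fin, nsmul_eq_mul] at hsum_var
    rw [hdef, variance_const_mul, hsum, hsum_var]
    field_simp
  calc ν {T | t ≤ |empiricalMean f T - ∫ z, f z ∂D|}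
      ≤ ENNReal.ofReal (Var[empiricalMean f; ν] / t ^ 2) := by
        rw [← hmean]; exact meas_ge_le_variance_div_sq hX ht
    _ = ENNReal.ofReal (Var[f; D] / (n * t ^ 2)) := by rw [hvar, div_div]

lemma inv_two_le_measure_integral_sub_lt_empiricalMean {f : Z → ℝ} (hfm : AEMeasurable f D)
    (hf : ∀ z, f z ∈ Icc (0 : ℝ) 1) {ε : ℝ} (hε : 0 < ε) (hnε : 2 ≤ (n : ℝ) * ε ^ 2) :
    2⁻¹ ≤ (Measure.pi fun _ : Fin n => D) {T | ∫ z, f z ∂D - ε / 2 < empiricalMean f T} := by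
  set ν := Measure.pi fun _ : Fin n => D
  have hn : n ≠ 0 := by rintro rfl; norm_num at hnε
  have hf_ae : ∀ᵐ z ∂D, f z ∈ Icc (0 : ℝ) 1 := ae_of_all _ hf
  have hvar : Var[f; D] ≤ 4⁻¹ := (variance_le_sq_of_bounded hf_ae hfm).trans_eq (by norm_num)
  have hdev : ν {T | ∫ z, f z ∂D - ε / 2 < empiricalMean f T}ᶜ ≤ 2⁻¹ := by
    calc ν {T | ∫ z, f z ∂D - ε / 2 < empiricalMean f T}ᶜ
        ≤ ν {T | ε / 2 ≤ |empiricalMean f T - ∫ z, f z ∂D|} := by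
          refine measure_mono fun T hT => ?_
          simp only [mem_compl_iff, mem_ofPred_eq, not_lt] at hT ⊢
          rw [abs_sub_comm]
          exact le_abs.2 (Or.inl (by linarith))
      _ ≤ ENNReal.ofReal (Var[f; D] / (n * (ε / 2) ^ 2)) :=
          measure_le_abs_empiricalMean_sub_integral_le hn (memLp_of_bounded hf_ae
            hfm.aestronglyMeasurable 2) (half_pos hε)
      _ ≤ ENNReal.ofReal 2⁻¹ := by
          gcongr
          rw [div_le_iff₀ (by positivity)]
          nlinarith
      _ = 2⁻¹ := by rw [ENNReal.ofReal_inv_of_pos two_pos, ENNReal.ofReal_ofNat]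
  have hcover := measure_univ_le_add_compl (μ := ν) {T | ∫ z, f z ∂D - ε / 2 < empiricalMean f T}
  rw [measure_univ, ← ENNReal.inv_two_add_inv_two] at hcover
  exact (ENNReal.add_le_add_iff_right (by norm_num)).mp (hcover.trans (by gcongr))

end Chebyshev

lemma le_measure_prod_of_le_measure_prodMk_preimage {α β : Type*} [MeasurableSpace α]
    [MeasurableSpace β] {μ : Measure α} {ν : Measure β} [SFinite ν] {A : Set α}
    {B : Set (α × β)} {c : ENNReal} (h : ∀ a ∈ A, c ≤ ν (Prod.mk a ⁻¹' B)) :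
    c * μ A ≤ μ.prod ν B := by
  set B' := toMeasurable (μ.prod ν) B
  have hB' : MeasurableSet B' := measurableSet_toMeasurable _ _
  calc c * μ A ≤ c * μ {a | c ≤ ν (Prod.mk a ⁻¹' B')} := by
        gcongr
        exact fun a ha => (h a ha).trans (measure_mono (preimage_mono (subset_toMeasurable _ _)))
    _ ≤ ∫⁻ a, ν (Prod.mk a ⁻¹' B') ∂μ :=
        mul_meas_ge_le_lintegral (measurable_measure_prodMk_left hB') c
    _ = μ.prod ν B := by rw [← Measure.prod_apply hB', measure_toMeasurable]

/-- A non-integrable loss has junk integral `0` and so cannot witness a gap `> ε`; an integrable one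
is a.e.-measurable and the Chebyshev bound applies to it. -/
lemma inv_two_le_measure_sup_empiricalMean_sub_gt {Z Hyp : Type*} [MeasurableSpace Z]
    {D : Measure Z} [IsProbabilityMeasure D] {m n : ℕ} {s : Set Hyp} {L : Hyp → Z → ℝ}
    (hL : ∀ h z, L h z ∈ Icc (0 : ℝ) 1) {ε : ℝ} (hε : 0 < ε) (hnε : 2 ≤ (n : ℝ) * ε ^ 2)
    {S : Fin m → Z} (hS : ε < ⨆ h ∈ s, (∫ z, L h z ∂D - empiricalMean (L h) S)) :
    2⁻¹ ≤ (Measure.pi fun _ : Fin n => D)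
      {T | ε / 2 < ⨆ h ∈ s, (empiricalMean (L h) T - empiricalMean (L h) S)} := by
  obtain ⟨h, hs, hgap⟩ := Real.exists_lt_of_lt_biSup hε.le hS
  have hint : Integrable (L h) D := by
    by_contra hc
    rw [integral_undef hc] at hgap
    linarith [(empiricalMean_mem_Icc (hL h) S).1]
  refine (inv_two_le_measure_integral_sub_lt_empiricalMean hint.aemeasurable (hL h) hε hnε).trans
    (measure_mono ?_)
  intro T (hT : ∫ z, L h z ∂D - ε / 2 < empiricalMean (L h) T)
  have hbdd : BddAbove (range fun h' => empiricalMean (L h') T - empiricalMean (L h') S) := by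
    refine ⟨1, ?_⟩
    rintro _ ⟨h', rfl⟩
    linarith [(empiricalMean_mem_Icc (hL h') T).2, (empiricalMean_mem_Icc (hL h') S).1]
  calc ε / 2 < empiricalMean (L h) T - empiricalMean (L h) S := by linarith
    _ ≤ _ := Real.le_biSup hbdd hs

theorem stmt6_general {Z Hyp : Type*} [MeasurableSpace Z] (D : Measure Z) [IsProbabilityMeasure D]
    (m n : ℕ)
    (H : (Fin m → Z) → Set Hyp) (L : Hyp → Z → ℝ)
    (hL : ∀ h z, L h z ∈ Set.Icc (0 : ℝ) 1)
    (ε : ℝ) (hε : 0 < ε) (hnε : 2 ≤ (n : ℝ) * ε ^ 2) :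
    (Measure.pi fun _ : Fin m => D)
        {S | (⨆ h ∈ H S, ((∫ z, L h z ∂D) - (m : ℝ)⁻¹ * ∑ i, L h (S i))) > ε}
      ≤ 2 * ((Measure.pi fun _ : Fin m => D).prod (Measure.pi fun _ : Fin n => D))
          {p | (⨆ h ∈ H p.1,
            ((n : ℝ)⁻¹ * ∑ i, L h (p.2 i) - (m : ℝ)⁻¹ * ∑ i, L h (p.1 i))) > ε / 2} := by
  set μ := Measure.pi fun _ : Fin m => D
  set A := {S | (⨆ h ∈ H S, ((∫ z, L h z ∂D) - (m : ℝ)⁻¹ * ∑ i, L h (S i))) > ε}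
  set B := {p : (Fin m → Z) × (Fin n → Z) | (⨆ h ∈ H p.1,
    ((n : ℝ)⁻¹ * ∑ i, L h (p.2 i) - (m : ℝ)⁻¹ * ∑ i, L h (p.1 i))) > ε / 2}
  have hhalf : 2⁻¹ * μ A ≤ (μ.prod (Measure.pi fun _ : Fin n => D)) B :=
    le_measure_prod_of_le_measure_prodMk_preimage fun S hS =>
      inv_two_le_measure_sup_empiricalMean_sub_gt hL hε hnε hS
  calc μ A = 2 * (2⁻¹ * μ A) := by
        rw [← mul_assoc, ENNReal.mul_inv_cancel two_ne_zero ENNReal.ofNat_ne_top, one_mul]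
    _ ≤ _ := by gcongr

/-- Symmetrization for data-dependent hypothesis sets: for `ε > 0` with `n ε² ≥ 2`,
`P_{S ~ D^m}[ sup_{h ∈ H_S} R(h) - R̂_S(h) > ε ]
  ≤ 2 P_{S ~ D^m, T ~ D^n}[ sup_{h ∈ H_S} R̂_T(h) - R̂_S(h) > ε/2 ]`. -/
theorem stmt6 {Z Hyp : Type*} [MeasurableSpace Z] (D : Measure Z) [IsProbabilityMeasure D]
    (m n : ℕ) (hm : 0 < m) (hn : 1 ≤ n)
    (H : (Fin m → Z) → Set Hyp) (L : Hyp → Z → ℝ)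
    (hL : ∀ h z, L h z ∈ Set.Icc (0 : ℝ) 1)
    (ε : ℝ) (hε : 0 < ε) (hnε : 2 ≤ (n : ℝ) * ε ^ 2) :
    (Measure.pi fun _ : Fin m => D)
        {S | (⨆ h ∈ H S, ((∫ z, L h z ∂D) - (m : ℝ)⁻¹ * ∑ i, L h (S i))) > ε}
      ≤ 2 * ((Measure.pi fun _ : Fin m => D).prod (Measure.pi fun _ : Fin n => D))
          {p | (⨆ h ∈ H p.1,
            ((n : ℝ)⁻¹ * ∑ i, L h (p.2 i) - (m : ℝ)⁻¹ * ∑ i, L h (p.1 i))) > ε / 2} :=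
  stmt6_general D m n H L hL ε hε hnε
end

section
/- Fix U ∈ Z^{m+n}, and let (S,T) be a uniformly random partition of U into a subsample S of size m and its complement T of size n (sampling S without replacement from U). Then E_{(S,T)}[ sup_{h ∈ H̄_{U,m}} R̂_T(h) − R̂_S(h) ] ≤ ℜ̂°_{U,m}(G) + √( log(2e)·(m+n)³ / (2·(mn)²) ). In particular, for m = n the bound becomes ℜ̂°_{U,m}(G) + 2·√(log(2e)/m). -/
open MeasureTheory Finset

/-- Transductive Rademacher complexity `ℜ̂°_{U,m}(G)` for a supersample `U ∈ Z^{m+n}`: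
`E_σ[ sup_{h ∈ H̄_{U,m}} (1/(m+n)) Σ_i σ_i L(h, z^U_i) ]`, where the `σ_i` are i.i.d.,
taking value `(m+n)/n` with probability `n/(m+n)` (encoded `true`) and `-(m+n)/m` with
probability `m/(m+n)` (encoded `false`), and `H̄_{U,m}` is the union of the hypothesis
sets `H S` over all subsamples `S` of `U` of size `m`. -/
noncomputable def transRad {Z Hyp : Type*} (m n : ℕ) (H : (Fin m → Z) → Set Hyp)
    (L : Hyp → Z → ℝ) (U : Fin (m + n) → Z) : ℝ :=
  ∑ σ : Fin (m + n) → Bool,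
    (∏ i, if σ i then (n : ℝ) / (m + n) else (m : ℝ) / (m + n)) *
      ⨆ h ∈ ⋃ φ : Fin m ↪ Fin (m + n), H (fun i => U (φ i)),
        ((m : ℝ) + n)⁻¹ *
          ∑ i, (if σ i then ((m : ℝ) + n) / n else -(((m : ℝ) + n) / m)) * L h (U i)

/-- Expectation, over a uniformly random partition of `U` into a size-`m` subsample `S`
(indexed by a uniformly random `A ⊆ [m+n]` with `|A| = m`) and its complement `T`, of
`sup_{h ∈ H̄_{U,m}} R̂_T(h) - R̂_S(h)`. -/
noncomputable def partitionGap {Z Hyp : Type*} (m n : ℕ) (H : (Fin m → Z) → Set Hyp)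
    (L : Hyp → Z → ℝ) (U : Fin (m + n) → Z) : ℝ :=
  (((m + n).choose m : ℝ))⁻¹ *
    ∑ A ∈ Finset.powersetCard m (Finset.univ : Finset (Fin (m + n))),
      ⨆ h ∈ ⋃ φ : Fin m ↪ Fin (m + n), H (fun i => U (φ i)),
        ((n : ℝ)⁻¹ * ∑ i ∈ Aᶜ, L h (U i) - (m : ℝ)⁻¹ * ∑ i ∈ A, L h (U i))

/-!
Identify a sign vector `σ` with the set `A` of coordinates carrying the negative value
`-(m+n)/m`. Then the Rademacher average at `σ` is `F A = sup_h (R̂_{Aᶜ}(h) - R̂_A(h))`, the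
transductive Rademacher complexity is `E F(A)` with `|A| ~ Binomial(m+n, m/(m+n))`, and the
left-hand side is the average `g m` of `F` over the layer `|A| = m`. Moving one point across
the partition changes `F` by at most `1/m + 1/n`; by double counting the pairs `A ⊂ insert i A`,
so do consecutive layer averages, hence `g m ≤ g K + (1/m + 1/n) |K - m|` for every layer `K`.
Averaging over `K ~ Binomial(m+n, m/(m+n))`, whose mean is `m` and whose variance is
`mn/(m+n)`, and using `E|K - m| ≤ √Var K` gives the bound with the additive term
`(1/m + 1/n) √(mn/(m+n)) = √((m+n)/(mn))`, which is smaller than the stated one since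
`2mn ≤ (m+n)²` and `log(2e) ≥ 1`.
-/

theorem abs_ciSup_sub_ciSup_le {ι : Type*} {f g : ι → ℝ} (hf : BddAbove (Set.range f))
    (hg : BddAbove (Set.range g)) {c : ℝ} (hc : 0 ≤ c) (h : ∀ i, |f i - g i| ≤ c) :
    |(⨆ i, f i) - ⨆ i, g i| ≤ c := by
  cases isEmpty_or_nonempty ι
  · simpa using hc
  refine abs_sub_le_iff.2 ⟨?_, ?_⟩ <;> rw [sub_le_iff_le_add] <;> refine ciSup_le fun i => ?_
  · linarith [(abs_sub_le_iff.1 (h i)).1, le_ciSup hg i]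
  · linarith [(abs_sub_le_iff.1 (h i)).2, le_ciSup hf i]

theorem abs_biSup_sub_biSup_le {ι : Type*} {s : Set ι} {f g : ι → ℝ}
    (hf : BddAbove (Set.range f)) (hg : BddAbove (Set.range g)) {c : ℝ} (hc : 0 ≤ c)
    (h : ∀ i ∈ s, |f i - g i| ≤ c) :
    |(⨆ i ∈ s, f i) - ⨆ i ∈ s, g i| ≤ c := by
  have bdd : ∀ u : ι → ℝ, BddAbove (Set.range u) →
      BddAbove (Set.range fun i => ⨆ _ : i ∈ s, u i) := by
    rintro u ⟨B, hB⟩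
    exact ⟨max B 0, Set.forall_mem_range.2 fun i =>
      Real.iSup_le (fun _ => (hB ⟨i, rfl⟩).trans (le_max_left B 0)) (le_max_right B 0)⟩
  refine abs_ciSup_sub_ciSup_le (bdd f hf) (bdd g hg) hc fun i => ?_
  by_cases hi : i ∈ s
  · simpa only [ciSup_pos hi] using h i hi
  · simpa [hi] using hc

noncomputable def binomialWeight (N : ℕ) (p : ℝ) (k : ℕ) : ℝ :=
  N.choose k * p ^ k * (1 - p) ^ (N - k)

theorem binomialWeight_eq_eval (N : ℕ) (p : ℝ) (k : ℕ) :
    binomialWeight N p k = (bernsteinPolynomial ℝ N k).eval p := by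
  simp [binomialWeight, bernsteinPolynomial]

theorem binomialWeight_nonneg {p : ℝ} (hp₀ : 0 ≤ p) (hp₁ : p ≤ 1) (N k : ℕ) :
    0 ≤ binomialWeight N p k := by
  have : 0 ≤ 1 - p := sub_nonneg.2 hp₁
  unfold binomialWeight
  positivity

theorem sum_binomialWeight (N : ℕ) (p : ℝ) :
    ∑ k ∈ range (N + 1), binomialWeight N p k = 1 := by
  simpa [binomialWeight_eq_eval, Polynomial.eval_finsetSum] using
    congrArg (Polynomial.eval p) (bernsteinPolynomial.sum ℝ N)

theorem sum_binomialWeight_mul_sub_sq (N : ℕ) (p : ℝ) :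
    ∑ k ∈ range (N + 1), binomialWeight N p k * (N * p - k) ^ 2 = N * p * (1 - p) := by
  have := congrArg (Polynomial.eval p) (bernsteinPolynomial.variance ℝ N)
  simp only [Polynomial.eval_finsetSum, Polynomial.eval_mul, Polynomial.eval_pow,
    Polynomial.eval_sub, Polynomial.eval_natCast, Polynomial.eval_X, Polynomial.eval_one,
    nsmul_eq_mul, ← binomialWeight_eq_eval] at this
  simpa only [mul_comm (binomialWeight N p _)] using this

theorem sum_mul_abs_le_sqrt_sum_mul_sq {ι : Type*} (s : Finset ι) {w : ι → ℝ}
    (hw : ∀ i ∈ s, 0 ≤ w i) (hw₁ : ∑ i ∈ s, w i = 1) (x : ι → ℝ) :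
    ∑ i ∈ s, w i * |x i| ≤ √(∑ i ∈ s, w i * x i ^ 2) := by
  calc ∑ i ∈ s, w i * |x i| = ∑ i ∈ s, √(w i) * (√(w i) * |x i|) :=
        sum_congr rfl fun i hi => by rw [← mul_assoc, Real.mul_self_sqrt (hw i hi)]
    _ ≤ √(∑ i ∈ s, √(w i) ^ 2) * √(∑ i ∈ s, (√(w i) * |x i|) ^ 2) :=
        Real.sum_mul_le_sqrt_mul_sqrt _ _ _
    _ = √(∑ i ∈ s, w i * x i ^ 2) := by
        rw [sum_congr rfl fun i hi => Real.sq_sqrt (hw i hi), hw₁, Real.sqrt_one, one_mul]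
        exact congrArg _ (sum_congr rfl fun i hi => by rw [mul_pow, Real.sq_sqrt (hw i hi), sq_abs])

section LayerAverage

variable {α : Type*} [Fintype α]

noncomputable def layerAverage (F : Finset α → ℝ) (k : ℕ) : ℝ :=
  ((Fintype.card α).choose k : ℝ)⁻¹ * ∑ A ∈ powersetCard k univ, F A

theorem sum_powersetCard_sum_compl_insert [DecidableEq α] (F : Finset α → ℝ) (k : ℕ) :
    ∑ A ∈ powersetCard k univ, ∑ i ∈ Aᶜ, F (insert i A)
      = (k + 1) * ∑ B ∈ powersetCard (k + 1) univ, F B := by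
  have hB : ∀ B ∈ powersetCard (k + 1) univ, (k + 1 : ℝ) * F B = ∑ _i ∈ B, F B := by
    intro B hB
    rw [sum_const, mem_powersetCard_univ.1 hB, nsmul_eq_mul]
    push_cast; rfl
  rw [mul_sum, sum_congr rfl hB, sum_sigma', sum_sigma']
  refine sum_nbij' (fun p => ⟨insert p.2 p.1, p.2⟩) (fun q => ⟨q.1.erase q.2, q.2⟩)
    ?_ ?_ ?_ ?_ fun _ _ => rfl
  · rintro ⟨A, i⟩ hA
    simp only [mem_sigma, mem_powersetCard_univ, mem_compl] at hA ⊢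
    exact ⟨by rw [card_insert_of_notMem hA.2, hA.1], mem_insert_self i A⟩
  · rintro ⟨B, i⟩ hB
    simp only [mem_sigma, mem_powersetCard_univ, mem_compl] at hB ⊢
    exact ⟨by rw [card_erase_of_mem hB.2, hB.1]; rfl, notMem_erase i B⟩
  · rintro ⟨A, i⟩ hA
    simp only [mem_sigma, mem_compl] at hA
    simp [erase_insert hA.2]
  · rintro ⟨B, i⟩ hB
    simp only [mem_sigma] at hB
    simp [insert_erase hB.2]

theorem sum_powersetCard_sum_compl_insert_sub [DecidableEq α] (F : Finset α → ℝ) (k : ℕ) :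
    ∑ A ∈ powersetCard k univ, ∑ i ∈ Aᶜ, (F (insert i A) - F A)
      = (k + 1) * ∑ B ∈ powersetCard (k + 1) univ, F B
        - (Fintype.card α - k : ℕ) * ∑ A ∈ powersetCard k univ, F A := by
  simp only [sum_sub_distrib]
  rw [sum_powersetCard_sum_compl_insert, mul_sum (powersetCard k univ)]
  refine congrArg _ (sum_congr rfl fun A hA => ?_)
  rw [sum_const, card_compl, mem_powersetCard_univ.1 hA, nsmul_eq_mul]

theorem abs_layerAverage_succ_sub_le [DecidableEq α] {F : Finset α → ℝ} {c : ℝ}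
    (hF : ∀ A, ∀ i ∉ A, |F (insert i A) - F A| ≤ c) {k : ℕ} (hk : k < Fintype.card α) :
    |layerAverage F (k + 1) - layerAverage F k| ≤ c := by
  set N := Fintype.card α
  have hC : (0 : ℝ) < N.choose k := by exact_mod_cast Nat.choose_pos hk.le
  have hC' : (0 : ℝ) < N.choose (k + 1) := by exact_mod_cast Nat.choose_pos hk
  have hNk : (0 : ℝ) < (N - k : ℕ) := by exact_mod_cast Nat.sub_pos_of_lt hk
  have hchoose : (k + 1 : ℝ) * N.choose (k + 1) = (N - k : ℕ) * N.choose k := by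
    have := Nat.choose_succ_right_eq N k
    rw [mul_comm, mul_comm (N.choose k)] at this
    exact_mod_cast this
  have hbound : |∑ A ∈ powersetCard k univ, ∑ i ∈ Aᶜ, (F (insert i A) - F A)|
      ≤ (N - k : ℕ) * N.choose k * c := by
    refine (abs_sum_le_sum_abs _ _).trans ?_
    refine (sum_le_sum fun A _ => (abs_sum_le_sum_abs _ _).trans
      (sum_le_sum fun i hi => hF A i (mem_compl.1 hi))).trans_eq ?_
    rw [sum_congr rfl fun A hA => by rw [sum_const, card_compl, mem_powersetCard_univ.1 hA],
      sum_const, card_powersetCard, card_univ]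
    simp only [nsmul_eq_mul]; ring
  rw [sum_powersetCard_sum_compl_insert_sub] at hbound
  have hsplit : layerAverage F (k + 1) - layerAverage F k
      = ((k + 1) * ∑ B ∈ powersetCard (k + 1) univ, F B
          - (N - k : ℕ) * ∑ A ∈ powersetCard k univ, F A) / ((N - k : ℕ) * N.choose k) := by
    rw [layerAverage, layerAverage, inv_mul_eq_div, inv_mul_eq_div,
      div_sub_div _ _ hC'.ne' hC.ne', div_eq_div_iff (by positivity) (by positivity)]
    linear_combination (-(∑ B ∈ powersetCard (k + 1) univ, F B) * N.choose k) * hchoose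
  rw [hsplit, abs_div, abs_of_pos (mul_pos hNk hC), div_le_iff₀ (mul_pos hNk hC)]
  linarith

theorem abs_layerAverage_sub_le [DecidableEq α] {F : Finset α → ℝ} {c : ℝ}
    (hF : ∀ A, ∀ i ∉ A, |F (insert i A) - F A| ≤ c) {j k : ℕ} (hj : j ≤ Fintype.card α)
    (hk : k ≤ Fintype.card α) :
    |layerAverage F j - layerAverage F k| ≤ c * |(j : ℝ) - k| := by
  wlog hjk : j ≤ k generalizing j k
  · rw [abs_sub_comm, abs_sub_comm (j : ℝ)]
    exact this hk hj (le_of_not_ge hjk)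
  have := dist_le_Ico_sum_of_dist_le (f := layerAverage F) (d := fun _ => c) hjk
    fun _ hl => by rw [dist_comm, Real.dist_eq]; exact abs_layerAverage_succ_sub_le hF (by omega)
  rwa [Real.dist_eq, sum_const, Nat.card_Ico, nsmul_eq_mul, Nat.cast_sub hjk, mul_comm,
    ← abs_of_nonneg (sub_nonneg.2 (Nat.cast_le.2 hjk)), abs_sub_comm (k : ℝ)] at this

theorem sum_pow_card_mul_eq_sum_layerAverage (F : Finset α → ℝ) (p : ℝ) :
    ∑ A, p ^ #A * (1 - p) ^ (Fintype.card α - #A) * F A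
      = ∑ k ∈ range (Fintype.card α + 1),
          binomialWeight (Fintype.card α) p k * layerAverage F k := by
  rw [← sum_fiberwise_of_maps_to (g := card) (t := range (Fintype.card α + 1))
    fun A _ => mem_range.2 (Nat.lt_succ_of_le (card_le_univ A))]
  refine sum_congr rfl fun k hk => ?_
  have hC : ((Fintype.card α).choose k : ℝ) ≠ 0 :=
    Nat.cast_ne_zero.2 (Nat.choose_pos (Nat.lt_succ_iff.1 (mem_range.1 hk))).ne'
  rw [layerAverage, univ_filter_card_eq, mul_sum, mul_sum]
  refine sum_congr rfl fun A hA => ?_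
  rw [mem_powersetCard_univ.1 hA, binomialWeight]
  field_simp

theorem layerAverage_le_sum_binomialWeight_mul_add [DecidableEq α] {F : Finset α → ℝ} {c : ℝ}
    (hc : 0 ≤ c) (hF : ∀ A, ∀ i ∉ A, |F (insert i A) - F A| ≤ c) {p : ℝ} (hp₀ : 0 ≤ p)
    (hp₁ : p ≤ 1) {m : ℕ} (hm : Fintype.card α * p = m) :
    layerAverage F m ≤ ∑ k ∈ range (Fintype.card α + 1),
        binomialWeight (Fintype.card α) p k * layerAverage F k
      + c * √(Fintype.card α * p * (1 - p)) := by
  set N := Fintype.card α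
  have hmN : m ≤ N := by
    have : (m : ℝ) ≤ N := hm ▸ mul_le_of_le_one_right (Nat.cast_nonneg N) hp₁
    exact_mod_cast this
  have hw := binomialWeight_nonneg hp₀ hp₁ N
  calc layerAverage F m = ∑ k ∈ range (N + 1), binomialWeight N p k * layerAverage F m := by
        rw [← sum_mul, sum_binomialWeight, one_mul]
    _ ≤ ∑ k ∈ range (N + 1), binomialWeight N p k * (layerAverage F k + c * |(m : ℝ) - k|) := by
        refine sum_le_sum fun k hk => mul_le_mul_of_nonneg_left ?_ (hw k)
        have := abs_layerAverage_sub_le hF hmN (Nat.lt_succ_iff.1 (mem_range.1 hk))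
        linarith [le_abs_self (layerAverage F m - layerAverage F k)]
    _ = ∑ k ∈ range (N + 1), binomialWeight N p k * layerAverage F k
          + c * ∑ k ∈ range (N + 1), binomialWeight N p k * |(m : ℝ) - k| := by
        rw [mul_sum, ← sum_add_distrib]
        exact sum_congr rfl fun k _ => by ring
    _ ≤ _ := by
        gcongr
        rw [← sum_binomialWeight_mul_sub_sq, hm]
        exact sum_mul_abs_le_sqrt_sum_mul_sq _ (fun k _ => hw k) (sum_binomialWeight N p) _

end LayerAverage

section Transductive

variable {Z Hyp : Type*} (m n : ℕ) (H : (Fin m → Z) → Set Hyp) (L : Hyp → Z → ℝ)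
  (U : Fin (m + n) → Z)

noncomputable def riskGap (A : Finset (Fin (m + n))) (h : Hyp) : ℝ :=
  (n : ℝ)⁻¹ * ∑ i ∈ Aᶜ, L h (U i) - (m : ℝ)⁻¹ * ∑ i ∈ A, L h (U i)

noncomputable def supRiskGap (A : Finset (Fin (m + n))) : ℝ :=
  ⨆ h ∈ ⋃ φ : Fin m ↪ Fin (m + n), H (fun i => U (φ i)), riskGap m n L U A h

theorem partitionGap_eq_layerAverage :
    partitionGap m n H L U = layerAverage (supRiskGap m n H L U) m := by
  rw [layerAverage, Fintype.card_fin]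
  rfl

variable {m n L U}

theorem riskGap_le (hL : ∀ h z, L h z ∈ Set.Icc (0 : ℝ) 1) (A : Finset (Fin (m + n)))
    (h : Hyp) : riskGap m n L U A h ≤ (n : ℝ)⁻¹ * #Aᶜ := by
  have hS : 0 ≤ (m : ℝ)⁻¹ * ∑ i ∈ A, L h (U i) :=
    mul_nonneg (by positivity) (sum_nonneg fun i _ => (hL h (U i)).1)
  have hT : ∑ i ∈ Aᶜ, L h (U i) ≤ #Aᶜ := by
    simpa using sum_le_card_nsmul Aᶜ _ 1 fun i _ => (hL h (U i)).2
  calc riskGap m n L U A h ≤ (n : ℝ)⁻¹ * ∑ i ∈ Aᶜ, L h (U i) := sub_le_self _ hS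
    _ ≤ (n : ℝ)⁻¹ * #Aᶜ := by gcongr

theorem abs_riskGap_insert_sub_le (hL : ∀ h z, L h z ∈ Set.Icc (0 : ℝ) 1)
    {A : Finset (Fin (m + n))} {i : Fin (m + n)} (hi : i ∉ A) (h : Hyp) :
    |riskGap m n L U (insert i A) h - riskGap m n L U A h| ≤ (m : ℝ)⁻¹ + (n : ℝ)⁻¹ := by
  have hdiff : riskGap m n L U (insert i A) h - riskGap m n L U A h
      = -(((m : ℝ)⁻¹ + (n : ℝ)⁻¹) * L h (U i)) := by
    rw [riskGap, riskGap, sum_insert hi, compl_insert,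
      ← add_sum_erase Aᶜ _ (mem_compl.2 hi)]
    ring
  rw [hdiff, abs_neg, abs_of_nonneg (mul_nonneg (by positivity) (hL h (U i)).1)]
  exact mul_le_of_le_one_right (by positivity) (hL h (U i)).2

theorem abs_supRiskGap_insert_sub_le (hL : ∀ h z, L h z ∈ Set.Icc (0 : ℝ) 1)
    (A : Finset (Fin (m + n))) (i : Fin (m + n)) (hi : i ∉ A) :
    |supRiskGap m n H L U (insert i A) - supRiskGap m n H L U A| ≤ (m : ℝ)⁻¹ + (n : ℝ)⁻¹ :=
  abs_biSup_sub_biSup_le ⟨_, Set.forall_mem_range.2 (riskGap_le hL _)⟩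
    ⟨_, Set.forall_mem_range.2 (riskGap_le hL _)⟩ (by positivity)
    fun h _ => abs_riskGap_insert_sub_le hL hi h

theorem rademacherSum_eq_riskGap (hmn : (m : ℝ) + n ≠ 0) (A : Finset (Fin (m + n))) (h : Hyp) :
    ((m : ℝ) + n)⁻¹ * ∑ i, (if decide (i ∉ A) then ((m : ℝ) + n) / n else -(((m : ℝ) + n) / m))
        * L h (U i) = riskGap m n L U A h := by
  have hA : ∀ i ∈ A, (if decide (i ∉ A) then ((m : ℝ) + n) / n else -(((m : ℝ) + n) / m))
      * L h (U i) = -(((m : ℝ) + n) / m) * L h (U i) := fun i hi => by simp [hi]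
  have hAc : ∀ i ∈ Aᶜ, (if decide (i ∉ A) then ((m : ℝ) + n) / n else -(((m : ℝ) + n) / m))
      * L h (U i) = ((m : ℝ) + n) / n * L h (U i) := fun i hi => by simp [mem_compl.1 hi]
  rw [riskGap, ← sum_add_sum_compl A, sum_congr rfl hA, sum_congr rfl hAc, ← mul_sum, ← mul_sum]
  field_simp
  ring

theorem transRad_eq_sum_binomialWeight (hmn : 0 < m + n) :
    transRad m n H L U = ∑ k ∈ range (m + n + 1),
      binomialWeight (m + n) (m / (m + n)) k * layerAverage (supRiskGap m n H L U) k := by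
  have hN : (m : ℝ) + n ≠ 0 := by exact_mod_cast hmn.ne'
  have hbij : Function.Bijective fun (A : Finset (Fin (m + n))) i => decide (i ∉ A) :=
    ⟨fun A B hAB => by ext i; simpa using congrFun hAB i,
      fun σ => ⟨({i | σ i = false} : Finset _), funext fun i => by simp⟩⟩
  rw [transRad, ← Fintype.sum_bijective _ hbij _ _ fun _ => rfl]
  have hq : 1 - (m : ℝ) / (m + n) = n / (m + n) := by field_simp; ring
  have := sum_pow_card_mul_eq_sum_layerAverage (supRiskGap m n H L U) ((m : ℝ) / (m + n))
  rw [Fintype.card_fin, hq] at this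
  rw [← this]
  refine sum_congr rfl fun A _ => ?_
  have hprod : (∏ i : Fin (m + n),
      if decide (i ∉ A) then (n : ℝ) / (m + n) else (m : ℝ) / (m + n))
        = ((m : ℝ) / (m + n)) ^ #A * ((n : ℝ) / (m + n)) ^ (m + n - #A) := by
    have hA : #A ≤ m + n := by simpa using card_le_univ A
    rw [prod_ite, prod_const, prod_const]
    simp only [decide_eq_true_eq, filter_not, filter_mem_eq_inter, univ_inter, card_univ_sdiff,
      Fintype.card_fin, Nat.sub_sub_self hA]
    ring
  simp only [hprod, supRiskGap, rademacherSum_eq_riskGap hN]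

end Transductive

theorem one_le_log_two_mul_exp_one : 1 ≤ Real.log (2 * Real.exp 1) := by
  rw [Real.log_mul two_ne_zero (Real.exp_ne_zero 1), Real.log_exp]
  linarith [Real.log_nonneg one_le_two]

theorem inv_add_inv_mul_sqrt_le {m n : ℝ} (hm : 0 < m) (hn : 0 < n) :
    (m⁻¹ + n⁻¹) * √(m * n / (m + n))
      ≤ √(Real.log (2 * Real.exp 1) * (m + n) ^ 3 / (2 * (m * n) ^ 2)) := by
  have hsq : (m⁻¹ + n⁻¹) * √(m * n / (m + n)) = √((m + n) / (m * n)) := by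
    rw [← Real.sqrt_sq (by positivity : 0 ≤ m⁻¹ + n⁻¹), ← Real.sqrt_mul (by positivity)]
    congr 1
    field_simp
    ring
  rw [hsq]
  refine Real.sqrt_le_sqrt ?_
  rw [div_le_div_iff₀ (by positivity) (by positivity)]
  have hamgm : 2 * (m * n) ≤ Real.log (2 * Real.exp 1) * (m + n) ^ 2 :=
    (by nlinarith [sq_nonneg (m - n)] : 2 * (m * n) ≤ (m + n) ^ 2).trans
      (le_mul_of_one_le_left (sq_nonneg _) one_le_log_two_mul_exp_one)
  nlinarith [mul_le_mul_of_nonneg_right hamgm (mul_pos (mul_pos hm hn) (add_pos hm hn)).le]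

/-- The expected transductive gap is bounded by the transductive Rademacher complexity
plus `√(log(2e) (m+n)³ / (2 (mn)²))`; in particular for `m = n` the additive term is
`2 √(log(2e)/m)`. -/
theorem stmt7 {Z Hyp : Type*} (m n : ℕ) (hm : 0 < m) (hn : 0 < n)
    (H : (Fin m → Z) → Set Hyp) (L : Hyp → Z → ℝ)
    (hL : ∀ h z, L h z ∈ Set.Icc (0 : ℝ) 1)
    (U : Fin (m + n) → Z) :
    partitionGap m n H L U
      ≤ transRad m n H L U
        + Real.sqrt (Real.log (2 * Real.exp 1) * ((m : ℝ) + n) ^ 3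
            / (2 * ((m : ℝ) * n) ^ 2))
    ∧ (m = n →
        partitionGap m n H L U
          ≤ transRad m n H L U + 2 * Real.sqrt (Real.log (2 * Real.exp 1) / m)) := by
  have hm' : (0 : ℝ) < m := by exact_mod_cast hm
  have hn' : (0 : ℝ) < n := by exact_mod_cast hn
  have hp : (Fintype.card (Fin (m + n)) : ℝ) * (m / (m + n)) = m := by
    rw [Fintype.card_fin]; push_cast; field_simp
  have hvar : (Fintype.card (Fin (m + n)) : ℝ) * (m / (m + n)) * (1 - m / (m + n))
      = m * n / (m + n) := by
    rw [hp]; field_simp; ring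
  have hgap := layerAverage_le_sum_binomialWeight_mul_add (F := supRiskGap m n H L U)
    (by positivity) (abs_supRiskGap_insert_sub_le H hL) (by positivity)
    (div_le_one_of_le₀ (by linarith) (by positivity)) hp
  rw [hvar, Fintype.card_fin, ← transRad_eq_sum_binomialWeight H (by omega),
    ← partitionGap_eq_layerAverage] at hgap
  have hmain := hgap.trans (add_le_add_right (inv_add_inv_mul_sqrt_le hm' hn') _)
  refine ⟨hmain, fun hmn => ?_⟩
  subst hmn
  have hsym : Real.log (2 * Real.exp 1) * ((m : ℝ) + m) ^ 3 / (2 * ((m : ℝ) * m) ^ 2)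
      = 2 ^ 2 * (Real.log (2 * Real.exp 1) / m) := by
    field_simp; ring
  rwa [hsym, Real.sqrt_mul (by positivity), Real.sqrt_sq (by norm_num)] at hmain
end

section
/- For each sample S = (x^S_1,...,x^S_m) of points in ℝ^N, let H_S = { x ↦ w·x : w = Σ_{i=1}^m α_i x^S_i with ‖α‖₁ ≤ Λ₁ } for a fixed Λ₁ ≥ 0. For samples S, T ∈ (ℝ^N)^m, set r_T = √( (Σ_{i=1}^m ‖x^T_i‖₂²)/m ) and r_{S∪T} = max_{x ∈ S∪T} ‖x‖₂. Then the empirical data-dependent Rademacher complexity satisfies ℜ̂°_{S,T}(H) ≤ r_T · r_{S∪T} · Λ₁ · √(2·log(4m)/m) ≤ r_{S∪T}² · Λ₁ · √(2·log(4m)/m). -/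
/-!
Fix σ and write W = S_{T,σ}. A hypothesis of H_W is h(x) = Σ_k α_k ⟨W_k, x⟩ with ‖α‖₁ ≤ Λ₁, so
by Hölder Σ_i σ_i h(x^T_i) ≤ Λ₁ max_k |Σ_i σ_i ⟨W_k, x^T_i⟩|, and each W_k is S_k or T_k.
Hence the supremum over H_W is at most Λ₁ max_a |⟨σ, a⟩| over the 2m vectors
a = (⟨U, x^T_i⟩)_i with U a point of S or T, and ‖a‖₂ ≤ r_{S∪T} √m r_T by Cauchy–Schwarz.
Massart's lemma for these vectors and their negatives (4m in all) bounds the σ-average of the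
maximum by r_{S∪T} √m r_T √(2 log 4m); dividing by m gives the first bound. The second is
r_T ≤ r_{S∪T}.
-/

open MeasureTheory Finset

/-- Empirical data-dependent Rademacher complexity `ℜ̂°_{S,T}(H)` for hypothesis sets of
real-valued functions: `(1/m) E_σ [ sup_{h ∈ H_{S,T}^σ} Σ_i σ_i h(x^T_i) ]`, where `σ_i`
are i.i.d. uniform on `{-1, +1}` (encoded by `Bool`, `true ↦ +1`), and
`H_{S,T}^σ = H (S_{T,σ})` with `S_{T,σ}` obtained from `S` by replacing its `i`-th point
by the `i`-th point of `T` whenever `σ_i = -1`. -/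
noncomputable def empRad {Z Hyp : Type*} (m : ℕ) (H : (Fin m → Z) → Set Hyp)
    (L : Hyp → Z → ℝ) (S T : Fin m → Z) : ℝ :=
  (m : ℝ)⁻¹ * ((2 ^ m : ℝ)⁻¹ *
    ∑ σ : Fin m → Bool,
      ⨆ h ∈ H (fun i => if σ i then S i else T i),
        ∑ i, (if σ i then (1 : ℝ) else -1) * L h (T i))

open Real
open scoped BigOperators

section Rademacher

variable {m : ℕ}

def rademacherSum (σ : Fin m → Bool) (a : Fin m → ℝ) : ℝ :=
  ∑ i, (if σ i then 1 else -1) * a i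

lemma rademacherSum_smul (σ : Fin m → Bool) (c : ℝ) (a : Fin m → ℝ) :
    rademacherSum σ (c • a) = c * rademacherSum σ a := by
  simp only [rademacherSum, mul_sum, Pi.smul_apply, smul_eq_mul]
  exact sum_congr rfl fun i _ => by ring

lemma rademacherSum_neg (σ : Fin m → Bool) (a : Fin m → ℝ) :
    rademacherSum σ (-a) = -rademacherSum σ a := by
  simp [rademacherSum]

lemma expect_eq_inv_two_pow_mul_sum (f : (Fin m → Bool) → ℝ) :
    𝔼 σ, f σ = (2 ^ m : ℝ)⁻¹ * ∑ σ, f σ := by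
  rw [Fintype.expect_eq_sum_div_card]
  simp [div_eq_inv_mul]

lemma exp_expect_le {ι : Type*} [Fintype ι] [Nonempty ι] (f : ι → ℝ) :
    exp (𝔼 i, f i) ≤ 𝔼 i, exp (f i) := by
  simp only [Fintype.expect_eq_sum_div_card, div_eq_inv_mul, mul_sum]
  have hcard : (0 : ℝ) < Fintype.card ι := by exact_mod_cast Fintype.card_pos
  simpa [smul_eq_mul] using convexOn_exp.map_sum_le (t := univ)
    (w := fun _ => (Fintype.card ι : ℝ)⁻¹) (p := f) (fun _ _ => by positivity)
    (by simp [hcard.ne']) (fun _ _ => Set.mem_univ _)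

lemma expect_exp_rademacherSum_le (a : Fin m → ℝ) :
    𝔼 σ, exp (rademacherSum σ a) ≤ exp ((∑ i, a i ^ 2) / 2) := by
  have hprod : 𝔼 σ, exp (rademacherSum σ a) = ∏ i, cosh (a i) := by
    rw [expect_eq_inv_two_pow_mul_sum]
    simp only [rademacherSum, exp_sum]
    rw [← Fintype.prod_sum (fun i (b : Bool) => exp ((if b then 1 else -1) * a i))]
    have hcosh : ∀ x : ℝ, ∑ b : Bool, exp ((if b then 1 else -1) * x) = 2 * cosh x := fun x => by
      simp only [Fintype.sum_bool, ite_true, Bool.false_eq_true, ite_false, one_mul, neg_one_mul,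
        cosh_eq]
      ring
    simp only [hcosh, prod_mul_distrib, prod_const, card_univ, Fintype.card_fin]
    field_simp
  rw [hprod, sum_div, exp_sum]
  exact prod_le_prod (fun i _ => (cosh_pos _).le) fun i _ => cosh_le_exp_half_sq _

lemma expect_iSup_rademacherSum_le_of_pos {ι : Type*} [Fintype ι] [Nonempty ι]
    (a : ι → Fin m → ℝ) {r : ℝ} (ha : ∀ j, ∑ i, a j i ^ 2 ≤ r ^ 2) {t : ℝ} (ht : 0 < t) :
    𝔼 σ, ⨆ j, rademacherSum σ (a j) ≤ log (Fintype.card ι) / t + t * r ^ 2 / 2 := by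
  have hexp_iSup : ∀ σ, exp (t * ⨆ j, rademacherSum σ (a j))
      ≤ ∑ j, exp (rademacherSum σ (t • a j)) := fun σ => by
    obtain ⟨j, hj⟩ := exists_eq_ciSup_of_finite (f := fun j => rademacherSum σ (a j))
    rw [← hj, ← rademacherSum_smul]
    exact single_le_sum (f := fun j => exp (rademacherSum σ (t • a j)))
      (fun _ _ => (exp_pos _).le) (mem_univ j)
  have hmgf : ∀ j, 𝔼 σ, exp (rademacherSum σ (t • a j)) ≤ exp (t ^ 2 * r ^ 2 / 2) := fun j => by
    refine (expect_exp_rademacherSum_le _).trans (exp_le_exp.2 ?_)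
    have hsq : ∑ i, (t • a j) i ^ 2 = t ^ 2 * ∑ i, a j i ^ 2 := by
      simp only [Pi.smul_apply, smul_eq_mul, mul_pow, mul_sum]
    rw [hsq]
    gcongr
    exact ha j
  have hbound : exp (t * 𝔼 σ, ⨆ j, rademacherSum σ (a j))
      ≤ Fintype.card ι * exp (t ^ 2 * r ^ 2 / 2) :=
    calc exp (t * 𝔼 σ, ⨆ j, rademacherSum σ (a j))
        = exp (𝔼 σ, t * ⨆ j, rademacherSum σ (a j)) := by rw [mul_expect]
      _ ≤ 𝔼 σ, exp (t * ⨆ j, rademacherSum σ (a j)) := exp_expect_le _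
      _ ≤ 𝔼 σ, ∑ j, exp (rademacherSum σ (t • a j)) :=
        expect_le_expect fun σ _ => hexp_iSup σ
      _ = ∑ j, 𝔼 σ, exp (rademacherSum σ (t • a j)) := expect_sum_comm _ _ _
      _ ≤ ∑ _j : ι, exp (t ^ 2 * r ^ 2 / 2) := sum_le_sum fun j _ => hmgf j
      _ = Fintype.card ι * exp (t ^ 2 * r ^ 2 / 2) := by simp
  have hcard : (0 : ℝ) < Fintype.card ι := by exact_mod_cast Fintype.card_pos
  have hlog := log_le_log (exp_pos _) hbound
  rw [log_exp, log_mul hcard.ne' (exp_pos _).ne', log_exp] at hlog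
  rw [div_add' _ _ _ ht.ne', le_div_iff₀ ht]
  nlinarith

/-- **Massart's finite class lemma**. -/
theorem expect_iSup_rademacherSum_le {ι : Type*} [Fintype ι] (a : ι → Fin m → ℝ) {r : ℝ}
    (hr : 0 ≤ r) (ha : ∀ j, ∑ i, a j i ^ 2 ≤ r ^ 2) (hcard : 1 < Fintype.card ι) :
    𝔼 σ, ⨆ j, rademacherSum σ (a j) ≤ r * √(2 * log (Fintype.card ι)) := by
  have : Nonempty ι := Fintype.card_pos_iff.1 (by omega)
  rcases hr.eq_or_lt with rfl | hr
  · have hzero : ∀ j, a j = 0 := fun j => funext fun i => by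
      have := (sum_eq_zero_iff_of_nonneg fun i _ => sq_nonneg (a j i)).1
        (le_antisymm (by simpa using ha j) (by positivity)) i (mem_univ i)
      simpa using this
    simp [hzero, rademacherSum]
  · set s := √(2 * log (Fintype.card ι))
    have hlog : 0 < log (Fintype.card ι) := log_pos (by exact_mod_cast hcard)
    have hs : 0 < s := sqrt_pos.2 (by positivity)
    have hs2 : s ^ 2 = 2 * log (Fintype.card ι) := sq_sqrt (by positivity)
    -- `t = s / r` minimises `log K / t + t r² / 2`
    refine (expect_iSup_rademacherSum_le_of_pos a ha (div_pos hs hr)).trans_eq ?_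
    field_simp
    nlinarith

theorem expect_iSup_abs_rademacherSum_le {ι : Type*} [Fintype ι] [Nonempty ι]
    (a : ι → Fin m → ℝ) {r : ℝ} (hr : 0 ≤ r) (ha : ∀ j, ∑ i, a j i ^ 2 ≤ r ^ 2) :
    𝔼 σ, ⨆ j, |rademacherSum σ (a j)| ≤ r * √(2 * log (2 * Fintype.card ι)) := by
  let b : ι × Bool → Fin m → ℝ := fun p => if p.2 then a p.1 else -a p.1
  have hb : ∀ p, ∑ i, b p i ^ 2 ≤ r ^ 2 := fun ⟨j, s⟩ => by cases s <;> simpa [b] using ha j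
  have hcard : 1 < Fintype.card (ι × Bool) := by
    simp only [Fintype.card_prod, Fintype.card_bool]
    have := Fintype.card_pos (α := ι)
    omega
  have habs : ∀ σ, ⨆ j, |rademacherSum σ (a j)| ≤ ⨆ p, rademacherSum σ (b p) := fun σ =>
    ciSup_le fun j => abs_le'.2
      ⟨le_ciSup_of_le (Set.finite_range _).bddAbove (j, true) le_rfl,
       le_ciSup_of_le (Set.finite_range _).bddAbove (j, false) (by simp [b, rademacherSum_neg])⟩
  calc 𝔼 σ, ⨆ j, |rademacherSum σ (a j)| ≤ 𝔼 σ, ⨆ p, rademacherSum σ (b p) :=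
        expect_le_expect fun σ _ => habs σ
    _ ≤ r * √(2 * log (Fintype.card (ι × Bool))) := expect_iSup_rademacherSum_le b hr hb hcard
    _ = r * √(2 * log (2 * Fintype.card ι)) := by simp [mul_comm]

end Rademacher

section LinearClass

variable {m N : ℕ}

def linearL1Class {κ : Type*} [Fintype κ] (Λ : ℝ) (W : κ → Fin N → ℝ) :
    Set ((Fin N → ℝ) → ℝ) :=
  {f | ∃ α : κ → ℝ, ∑ k, |α k| ≤ Λ ∧ f = fun x => ∑ j, (∑ k, α k * W k j) * x j}

lemma sum_mul_le_sum_abs_mul_iSup_abs {κ : Type*} [Fintype κ] (α d : κ → ℝ) :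
    ∑ k, α k * d k ≤ (∑ k, |α k|) * ⨆ k, |d k| := by
  rw [Finset.sum_mul]
  refine sum_le_sum fun k _ => ?_
  calc α k * d k ≤ |α k| * |d k| := (le_abs_self _).trans (abs_mul _ _).le
    _ ≤ |α k| * ⨆ k, |d k| := mul_le_mul_of_nonneg_left
      (le_ciSup (f := fun k => |d k|) (Set.finite_range _).bddAbove k) (abs_nonneg _)

lemma rademacherSum_linear {κ : Type*} [Fintype κ] (σ : Fin m → Bool) (α : κ → ℝ)
    (W : κ → Fin N → ℝ) (x : Fin m → Fin N → ℝ) :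
    rademacherSum σ (fun i => ∑ j, (∑ k, α k * W k j) * x i j)
      = ∑ k, α k * rademacherSum σ (fun i => ∑ j, W k j * x i j) := by
  simp only [rademacherSum, Finset.sum_mul, mul_sum]
  refine (sum_congr rfl fun i _ => Finset.sum_comm).trans (Finset.sum_comm.trans ?_)
  exact sum_congr rfl fun k _ => sum_congr rfl fun i _ => sum_congr rfl fun j _ => by ring

lemma iSup_rademacherSum_linearL1Class_le {κ : Type*} [Fintype κ] (σ : Fin m → Bool) {Λ : ℝ}
    (hΛ : 0 ≤ Λ) (W : κ → Fin N → ℝ) (x : Fin m → Fin N → ℝ) :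
    ⨆ h ∈ linearL1Class Λ W, rademacherSum σ (fun i => h (x i))
      ≤ Λ * ⨆ k, |rademacherSum σ (fun i => ∑ j, W k j * x i j)| := by
  have hM : 0 ≤ ⨆ k, |rademacherSum σ (fun i => ∑ j, W k j * x i j)| :=
    Real.iSup_nonneg fun _ => abs_nonneg _
  refine Real.iSup_le (fun h => Real.iSup_le (fun ⟨α, hα, hh⟩ => ?_) (by positivity))
    (by positivity)
  subst hh
  rw [rademacherSum_linear]
  exact (sum_mul_le_sum_abs_mul_iSup_abs _ _).trans (mul_le_mul_of_nonneg_right hα hM)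

lemma sum_sq_sum_mul_le {ι κ : Type*} [Fintype ι] [Fintype κ] (u : κ → ℝ) (x : ι → κ → ℝ) :
    ∑ i, (∑ j, u j * x i j) ^ 2 ≤ (∑ j, u j ^ 2) * ∑ i, ∑ j, x i j ^ 2 := by
  rw [mul_sum]
  exact sum_le_sum fun i _ => sum_mul_sq_le_sq_mul_sq _ _ _

end LinearClass

section Sample

variable {m N : ℕ} (S T : Fin m → Fin N → ℝ)

noncomputable def sampleRadius : ℝ :=
  ⨆ i, max √(∑ j, S i j ^ 2) √(∑ j, T i j ^ 2)

lemma sampleRadius_nonneg : 0 ≤ sampleRadius S T :=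
  Real.iSup_nonneg fun _ => (sqrt_nonneg _).trans (le_max_left _ _)

lemma sum_sq_le_sampleRadius_sq (k : Fin m) :
    ∑ j, S k j ^ 2 ≤ sampleRadius S T ^ 2 ∧ ∑ j, T k j ^ 2 ≤ sampleRadius S T ^ 2 := by
  have hk := le_ciSup (f := fun i => max √(∑ j, S i j ^ 2) √(∑ j, T i j ^ 2))
    (Set.finite_range _).bddAbove k
  exact ⟨(sqrt_le_iff.1 ((le_max_left _ _).trans hk)).2,
    (sqrt_le_iff.1 ((le_max_right _ _).trans hk)).2⟩

lemma sqrt_mean_sum_sq_le_sampleRadius :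
    √((∑ i, ∑ j, T i j ^ 2) / m) ≤ sampleRadius S T := by
  refine sqrt_le_iff.2 ⟨sampleRadius_nonneg S T, div_le_of_le_mul₀ (Nat.cast_nonneg _)
    (sq_nonneg _) ?_⟩
  calc ∑ i, ∑ j, T i j ^ 2 ≤ ∑ _i : Fin m, sampleRadius S T ^ 2 :=
        sum_le_sum fun k _ => (sum_sq_le_sampleRadius_sq S T k).2
    _ = sampleRadius S T ^ 2 * m := by simp [mul_comm]

theorem empRad_linearL1Class_le {Λ : ℝ} (hΛ : 0 ≤ Λ) (hm : 0 < m) :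
    empRad m (linearL1Class Λ) (fun f x => f x) S T
      ≤ (m : ℝ)⁻¹ * (Λ * (sampleRadius S T * √(∑ i, ∑ j, T i j ^ 2) * √(2 * log (4 * m)))) := by
  have : Nonempty (Fin m) := ⟨⟨0, hm⟩⟩
  let U : Fin m × Bool → Fin N → ℝ := fun p => if p.2 then S p.1 else T p.1
  let a : Fin m × Bool → Fin m → ℝ := fun p i => ∑ j, U p j * T i j
  have ha : ∀ p, ∑ i, a p i ^ 2 ≤ (sampleRadius S T * √(∑ i, ∑ j, T i j ^ 2)) ^ 2 := fun p => by
    rw [mul_pow, sq_sqrt (by positivity)]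
    refine (sum_sq_sum_mul_le _ _).trans (mul_le_mul_of_nonneg_right ?_ (by positivity))
    rcases p with ⟨k, _ | _⟩
    exacts [(sum_sq_le_sampleRadius_sq S T k).2, (sum_sq_le_sampleRadius_sq S T k).1]
  have hsup : ∀ σ, ⨆ h ∈ linearL1Class Λ (fun i => if σ i then S i else T i),
      rademacherSum σ (fun i => h (T i)) ≤ Λ * ⨆ p, |rademacherSum σ (a p)| := fun σ =>
    (iSup_rademacherSum_linearL1Class_le σ hΛ _ T).trans <| mul_le_mul_of_nonneg_left
      (ciSup_le fun k => le_ciSup_of_le (Set.finite_range _).bddAbove (k, σ k)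
        (by cases σ k <;> rfl)) hΛ
  have hcard : (2 : ℝ) * Fintype.card (Fin m × Bool) = 4 * m := by
    simp only [Fintype.card_prod, Fintype.card_fin, Fintype.card_bool, Nat.cast_mul]
    ring
  calc empRad m (linearL1Class Λ) (fun f x => f x) S T
      = (m : ℝ)⁻¹ * 𝔼 σ, ⨆ h ∈ linearL1Class Λ (fun i => if σ i then S i else T i),
          rademacherSum σ (fun i => h (T i)) := by rw [expect_eq_inv_two_pow_mul_sum]; rfl
    _ ≤ (m : ℝ)⁻¹ * (Λ * 𝔼 σ, ⨆ p, |rademacherSum σ (a p)|) := by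
        gcongr
        rw [mul_expect]
        exact expect_le_expect fun σ _ => hsup σ
    _ ≤ _ := by
        rw [← hcard]
        gcongr
        exact expect_iSup_abs_rademacherSum_le a
          (mul_nonneg (sampleRadius_nonneg S T) (sqrt_nonneg _)) ha

end Sample

/-- Bound on the empirical data-dependent Rademacher complexity of the family of
hypothesis sets `H_S = {x ↦ w·x : w = Σ_i α_i x^S_i, ‖α‖₁ ≤ Λ₁}` of linear predictors,
where points `x ∈ ℝ^N` are encoded as `Fin N → ℝ`, `w·x = Σ_j w_j x_j` and
`‖x‖₂ = √(Σ_j x_j²)`. -/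
theorem stmt9 (N m : ℕ) (hm : 0 < m) (Λ₁ : ℝ) (hΛ : 0 ≤ Λ₁)
    (S T : Fin m → Fin N → ℝ) :
    let H : (Fin m → Fin N → ℝ) → Set ((Fin N → ℝ) → ℝ) := fun W =>
      {f | ∃ α : Fin m → ℝ, (∑ i, |α i|) ≤ Λ₁ ∧
        f = fun x => ∑ j, (∑ i, α i * W i j) * x j}
    let rT : ℝ := Real.sqrt ((∑ i, ∑ j, (T i j) ^ 2) / m)
    let rST : ℝ := ⨆ i : Fin m,
      max (Real.sqrt (∑ j, (S i j) ^ 2)) (Real.sqrt (∑ j, (T i j) ^ 2))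
    empRad m H (fun f x => f x) S T
        ≤ rT * rST * Λ₁ * Real.sqrt (2 * Real.log (4 * m) / m)
    ∧ rT * rST * Λ₁ * Real.sqrt (2 * Real.log (4 * m) / m)
        ≤ rST ^ 2 * Λ₁ * Real.sqrt (2 * Real.log (4 * m) / m) := by
  intro H rT rST
  rw [show rST = sampleRadius S T from rfl]
  have hrT : rT ≤ sampleRadius S T := sqrt_mean_sum_sq_le_sampleRadius S T
  have hm1 : (1 : ℝ) ≤ m := by exact_mod_cast hm
  have hlog : 0 ≤ 2 * log (4 * m) := mul_nonneg zero_le_two (log_nonneg (by linarith))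
  have hr := sampleRadius_nonneg S T
  refine ⟨(empRad_linearL1Class_le S T hΛ hm).trans_eq ?_, by rw [sq]; gcongr⟩
  rw [show rT = √(∑ i, ∑ j, T i j ^ 2) / √m from sqrt_div (by positivity) _, sqrt_div hlog]
  field_simp
  rw [sq_sqrt (by positivity)]
  ring
end

section
/- Suppose that to every sample S ∈ Z^m one associates a matrix A_S ∈ ℝ^{d×N}, and for Λ > 0 let W_{S,Λ} = { w ∈ ℝ^d : ‖A_Sᵀ w‖₂ ≤ Λ } and H_S = { x ↦ wᵀ A_S x : w ∈ W_{S,Λ} }, where inputs x lie in ℝ^N. Then for any samples S, T, the empirical data-dependent Rademacher complexity satisfies ℜ̂°_{S,T}(H) ≤ Λ·√(Σ_{i=1}^m ‖x^T_i‖₂²)/m ≤ Λ·r/√m, where r = max_{i∈[m]} ‖x^T_i‖₂ and x^T_1,...,x^T_m are the input points of T. -/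
open MeasureTheory Finset

/-! For a fixed sign vector `σ`, the sample `S_{T,σ}` only selects the matrix `B = A_{S_{T,σ}}`,
and `∑ᵢ σᵢ wᵀ B xᵢ = ⟨Bᵀ w, ∑ᵢ σᵢ xᵢ⟩ ≤ Λ ‖∑ᵢ σᵢ xᵢ‖` by Cauchy–Schwarz, uniformly in `B`.
Averaging over `σ`, `E ‖∑ᵢ σᵢ xᵢ‖ ≤ √(E ‖∑ᵢ σᵢ xᵢ‖²) = √(∑ᵢ ‖xᵢ‖²)` because the cross terms
`E σᵢ σₖ` vanish for `i ≠ k`. Finally `∑ᵢ ‖xᵢ‖² ≤ m r²`. -/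

open scoped Matrix

def boolSign (b : Bool) : ℝ := if b then 1 else -1

lemma boolSign_mul_self (b : Bool) : boolSign b * boolSign b = 1 := by
  cases b <;> norm_num [boolSign]

lemma boolSign_not (b : Bool) : boolSign (!b) = -boolSign b := by
  cases b <;> norm_num [boolSign]

section Rademacher

variable {ι : Type*} [Fintype ι] [DecidableEq ι]

lemma sum_boolSign_mul_boolSign (i k : ι) :
    ∑ σ : ι → Bool, boolSign (σ i) * boolSign (σ k) =
      if i = k then 2 ^ Fintype.card ι else 0 := by
  split_ifs with hik
  · subst hik
    simp [boolSign_mul_self]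
  -- flipping the `i`-th sign is a bijection of `ι → Bool` that negates every summand
  have hflip : Function.Involutive fun σ : ι → Bool => Function.update σ i (!σ i) := fun σ => by
    simp
  have := Equiv.sum_comp (hflip.toPerm _) fun σ => boolSign (σ i) * boolSign (σ k)
  simp only [Function.Involutive.coe_toPerm, Function.update_self, boolSign_not,
    Function.update_of_ne (Ne.symm hik), neg_mul, sum_neg_distrib] at this
  linarith

lemma sum_sq_sum_boolSign_mul (a : ι → ℝ) :
    ∑ σ : ι → Bool, (∑ i, boolSign (σ i) * a i) ^ 2 = 2 ^ Fintype.card ι * ∑ i, a i ^ 2 := by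
  calc ∑ σ : ι → Bool, (∑ i, boolSign (σ i) * a i) ^ 2
      = ∑ i, ∑ k, a i * a k * ∑ σ : ι → Bool, boolSign (σ i) * boolSign (σ k) := by
        simp_rw [sq, sum_mul_sum, mul_sum]
        rw [sum_comm]
        refine sum_congr rfl fun i _ => ?_
        rw [sum_comm]
        exact sum_congr rfl fun k _ => sum_congr rfl fun σ _ => by ring
    _ = 2 ^ Fintype.card ι * ∑ i, a i ^ 2 := by
        simp [sum_boolSign_mul_boolSign, mul_sum, sq, mul_comm]

lemma sum_sum_sq_sum_boolSign_smul {ν : Type*} [Fintype ν] (x : ι → ν → ℝ) :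
    ∑ σ : ι → Bool, ∑ j, (∑ i, boolSign (σ i) • x i) j ^ 2 =
      2 ^ Fintype.card ι * ∑ i, ∑ j, x i j ^ 2 := by
  simp only [Finset.sum_apply, Pi.smul_apply, smul_eq_mul]
  rw [sum_comm, sum_comm (γ := ι)]
  simp only [sum_sq_sum_boolSign_mul, mul_sum]

lemma sum_sqrt_sum_sq_sum_boolSign_smul_le {ν : Type*} [Fintype ν] (x : ι → ν → ℝ) :
    ∑ σ : ι → Bool, √(∑ j, (∑ i, boolSign (σ i) • x i) j ^ 2) ≤
      2 ^ Fintype.card ι * √(∑ i, ∑ j, x i j ^ 2) := by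
  calc ∑ σ : ι → Bool, √(∑ j, (∑ i, boolSign (σ i) • x i) j ^ 2)
      = ∑ σ : ι → Bool, √1 * √(∑ j, (∑ i, boolSign (σ i) • x i) j ^ 2) := by
        simp only [Real.sqrt_one, one_mul]
    _ ≤ √(∑ _σ : ι → Bool, 1) * √(∑ σ : ι → Bool, ∑ j, (∑ i, boolSign (σ i) • x i) j ^ 2) :=
        Real.sum_sqrt_mul_sqrt_le _ (fun _ => zero_le_one) fun _ => by positivity
    _ = √(2 ^ Fintype.card ι) * √(2 ^ Fintype.card ι * ∑ i, ∑ j, x i j ^ 2) := by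
        rw [sum_sum_sq_sum_boolSign_smul]
        simp
    _ = 2 ^ Fintype.card ι * √(∑ i, ∑ j, x i j ^ 2) := by
        rw [Real.sqrt_mul (by positivity), ← mul_assoc, Real.mul_self_sqrt (by positivity)]

end Rademacher

lemma iSup_sum_mul_dotProduct_mulVec_le {ι κ ν : Type*} [Fintype ι] [Fintype κ] [Fintype ν]
    (B : Matrix κ ν ℝ) {Λ : ℝ} (hΛ : 0 ≤ Λ) (c : ι → ℝ) (x : ι → ν → ℝ) :
    ⨆ h ∈ {f : (ν → ℝ) → ℝ | ∃ w : κ → ℝ, √(∑ j, (Bᵀ *ᵥ w) j ^ 2) ≤ Λ ∧ f = fun y => w ⬝ᵥ B *ᵥ y},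
      ∑ i, c i * h (x i) ≤ Λ * √(∑ j, (∑ i, c i • x i) j ^ 2) := by
  have hb : 0 ≤ Λ * √(∑ j, (∑ i, c i • x i) j ^ 2) := by positivity
  refine Real.iSup_le (fun h => Real.iSup_le (fun ⟨w, hw, hh⟩ => ?_) hb) hb
  have hdual : ∑ i, c i * h (x i) = (Bᵀ *ᵥ w) ⬝ᵥ ∑ i, c i • x i := by
    simp only [hh, Matrix.dotProduct_mulVec, ← Matrix.mulVec_transpose, dotProduct_sum,
      dotProduct_smul, smul_eq_mul]
  rw [hdual]
  exact (Real.sum_mul_le_sqrt_mul_sqrt _ _ _).trans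
    (mul_le_mul_of_nonneg_right hw (Real.sqrt_nonneg _))

lemma sqrt_sum_sum_sq_le_sqrt_card_mul_iSup {ι ν : Type*} [Fintype ι] [Fintype ν]
    (x : ι → ν → ℝ) :
    √(∑ i, ∑ j, x i j ^ 2) ≤ √(Fintype.card ι) * ⨆ i, √(∑ j, x i j ^ 2) := by
  set g : ι → ℝ := fun i => √(∑ j, x i j ^ 2)
  have hg (i : ι) : 0 ≤ g i := Real.sqrt_nonneg _
  have hle (i : ι) : g i ≤ ⨆ i, g i := le_ciSup (Set.finite_range g).bddAbove i
  calc √(∑ i, ∑ j, x i j ^ 2) = √(∑ i, g i ^ 2) := by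
        simp only [g, Real.sq_sqrt (sum_nonneg fun _ _ => sq_nonneg _)]
    _ ≤ √(∑ _i : ι, (⨆ i, g i) ^ 2) :=
        Real.sqrt_le_sqrt (sum_le_sum fun i _ => pow_le_pow_left₀ (hg i) (hle i) 2)
    _ = √(Fintype.card ι) * ⨆ i, g i := by
        rw [sum_const, card_univ, nsmul_eq_mul, Real.sqrt_mul (Nat.cast_nonneg _),
          Real.sqrt_sq (Real.iSup_nonneg hg)]

theorem stmt10_general (N d m : ℕ) (Λ : ℝ) (hΛ : 0 < Λ)
    (A : (Fin m → Fin N → ℝ) → Matrix (Fin d) (Fin N) ℝ)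
    (S T : Fin m → Fin N → ℝ) :
    let H : (Fin m → Fin N → ℝ) → Set ((Fin N → ℝ) → ℝ) := fun W =>
      {f | ∃ w : Fin d → ℝ,
        Real.sqrt (∑ j, (Matrix.mulVec (Matrix.transpose (A W)) w j) ^ 2) ≤ Λ ∧
        f = fun x => dotProduct w (Matrix.mulVec (A W) x)}
    let r : ℝ := ⨆ i : Fin m, Real.sqrt (∑ j, (T i j) ^ 2)
    empRad m H (fun f x => f x) S T
        ≤ Λ * Real.sqrt (∑ i, ∑ j, (T i j) ^ 2) / m
    ∧ Λ * Real.sqrt (∑ i, ∑ j, (T i j) ^ 2) / m ≤ Λ * r / Real.sqrt m := by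
  intro H r
  constructor
  · have hsum : ∑ σ : Fin m → Bool, ⨆ h ∈ H (fun i => if σ i then S i else T i),
        ∑ i, boolSign (σ i) * h (T i) ≤ 2 ^ m * (Λ * √(∑ i, ∑ j, T i j ^ 2)) := calc
      _ ≤ Λ * ∑ σ : Fin m → Bool, √(∑ j, (∑ i, boolSign (σ i) • T i) j ^ 2) := by
          rw [mul_sum]
          exact sum_le_sum fun σ _ => iSup_sum_mul_dotProduct_mulVec_le _ hΛ.le _ T
      _ ≤ Λ * (2 ^ m * √(∑ i, ∑ j, T i j ^ 2)) := by
          gcongr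
          simpa using sum_sqrt_sum_sq_sum_boolSign_smul_le T
      _ = 2 ^ m * (Λ * √(∑ i, ∑ j, T i j ^ 2)) := mul_left_comm _ _ _
    unfold empRad
    calc _ ≤ (m : ℝ)⁻¹ * ((2 ^ m)⁻¹ * (2 ^ m * (Λ * √(∑ i, ∑ j, T i j ^ 2)))) := by
          gcongr
          exact hsum
      _ = Λ * √(∑ i, ∑ j, T i j ^ 2) / m := by field_simp
  · have hr : √(∑ i, ∑ j, T i j ^ 2) ≤ √m * r := by
      simpa using sqrt_sum_sum_sq_le_sqrt_card_mul_iSup T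
    calc Λ * √(∑ i, ∑ j, T i j ^ 2) / m ≤ Λ * (√m * r) / m := by gcongr
      _ = Λ * r * (√m / m) := by ring
      _ = Λ * r / √m := by rw [Real.sqrt_div_self', mul_one_div]

/-- Bound on the empirical data-dependent Rademacher complexity of the family of
hypothesis sets `H_S = {x ↦ wᵀ A_S x : ‖A_Sᵀ w‖₂ ≤ Λ}`, where points `x ∈ ℝ^N` are
encoded as `Fin N → ℝ` and `‖v‖₂ = √(Σ_j v_j²)`. -/
theorem stmt10 (N d m : ℕ) (hm : 0 < m) (Λ : ℝ) (hΛ : 0 < Λ)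
    (A : (Fin m → Fin N → ℝ) → Matrix (Fin d) (Fin N) ℝ)
    (S T : Fin m → Fin N → ℝ) :
    let H : (Fin m → Fin N → ℝ) → Set ((Fin N → ℝ) → ℝ) := fun W =>
      {f | ∃ w : Fin d → ℝ,
        Real.sqrt (∑ j, (Matrix.mulVec (Matrix.transpose (A W)) w j) ^ 2) ≤ Λ ∧
        f = fun x => dotProduct w (Matrix.mulVec (A W) x)}
    let r : ℝ := ⨆ i : Fin m, Real.sqrt (∑ j, (T i j) ^ 2)
    empRad m H (fun f x => f x) S T
        ≤ Λ * Real.sqrt (∑ i, ∑ j, (T i j) ^ 2) / m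
    ∧ Λ * Real.sqrt (∑ i, ∑ j, (T i j) ^ 2) / m ≤ Λ * r / Real.sqrt m :=
  stmt10_general N d m Λ hΛ A S T
end

section
/- Suppose the family of data-dependent hypothesis sets (H_S)_{S∈Z^m} is β-uniformly stable and has max-diameter Δ_max, and let S ↦ h_S be any map selecting a hypothesis h_S ∈ H_S for every sample S. Then for any two samples S, S' ∈ Z^m differing in exactly one point and for every z ∈ Z, |L(h_S, z) − L(h_{S'}, z)| ≤ 3β + Δ_max; i.e., the selector is uniformly stable with parameter 3β + Δ_max in the classical sense. -/
/-!
Let `S, S'` differ only at index `j` and let `T` be `S` with its `j`-th point replaced by `z`.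
Then `T` is adjacent to both `S` and `S'`, so stability moves `h_S` and `h_{S'}` into `H_T`
at a cost of `β` each. Since `z = T j` is a sample point of `T`, the two hypotheses of `H_T`
differ at `z` by at most `Δ_max`. This gives the bound `2β + Δ_max ≤ 3β + Δ_max`.
-/

open Set

theorem le_biSup_of_bddAbove {ι α : Type*} [ConditionallyCompleteLattice α] {s : Set ι}
    {f : ι → α} (hf : BddAbove (f '' s)) {i : ι} (hi : i ∈ s) : f i ≤ ⨆ i ∈ s, f i :=
  le_ciSup₂ (f := fun i (_ : i ∈ s) => f i)
    (hf.mono <| by rintro _ ⟨_, ⟨k, rfl⟩, ⟨hk, rfl⟩⟩; exact ⟨k, hk, rfl⟩) i hi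

-- The bound on `g` matters: a real `⨆` over a family that is not bounded above is `0`.
theorem sub_le_biSup_biSup_sub {ι : Type*} {s : Set ι} {g : ι → ℝ} (hg : ∀ i, g i ∈ Icc 0 1)
    {a b : ι} (ha : a ∈ s) (hb : b ∈ s) : g a - g b ≤ ⨆ a ∈ s, ⨆ b ∈ s, (g a - g b) := by
  have hsub : ∀ a b, g a - g b ≤ 1 := fun a b => by linarith [(hg a).2, (hg b).1]
  calc g a - g b ≤ ⨆ b ∈ s, (g a - g b) :=
        le_biSup_of_bddAbove (f := fun b => g a - g b)
          ⟨1, by rintro _ ⟨b, _, rfl⟩; exact hsub a b⟩ hb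
    _ ≤ ⨆ a ∈ s, ⨆ b ∈ s, (g a - g b) :=
        le_biSup_of_bddAbove (f := fun a => ⨆ b ∈ s, (g a - g b)) ⟨1, by
          rintro _ ⟨a, _, rfl⟩
          exact Real.iSup_le (fun b => Real.iSup_le (fun _ => hsub a b) zero_le_one) zero_le_one⟩
          ha

theorem eq_update_off_of_eq_off {ι α : Type*} [DecidableEq ι] {S S' : ι → α} {j : ι}
    (hj : ∀ i, i ≠ j → S i = S' i) (z : α) : ∀ i, i ≠ j → S' i = Function.update S j z i :=
  fun i hi => (hj i hi).symm.trans (Function.update_of_ne hi z S).symm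

theorem stmt14_general {Z Hyp : Type*}
    (m : ℕ) (H : (Fin m → Z) → Set Hyp) (L : Hyp → Z → ℝ)
    (hL : ∀ h z, L h z ∈ Set.Icc (0 : ℝ) 1)
    (β : ℝ) (hβ : 0 ≤ β)
    (hstable : ∀ S S' : Fin m → Z, (∃ j, ∀ i, i ≠ j → S i = S' i) →
      ∀ h ∈ H S, ∃ h' ∈ H S', ∀ z, |L h z - L h' z| ≤ β)
    (Δmax : ℝ)
    (hdiam : ∀ S : Fin m → Z, ∀ j : Fin m,
      (⨆ h' ∈ H S, ⨆ h ∈ H S, (L h' (S j) - L h (S j))) ≤ Δmax)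
    (sel : (Fin m → Z) → Hyp) (hsel : ∀ S, sel S ∈ H S)
    (S S' : Fin m → Z) (hadj : ∃ j, ∀ i, i ≠ j → S i = S' i) (z : Z) :
    |L (sel S) z - L (sel S') z| ≤ 3 * β + Δmax := by
  obtain ⟨j, hj⟩ := hadj
  set T := Function.update S j z
  obtain ⟨g, hg, hgS⟩ := hstable S T ⟨j, eq_update_off_of_eq_off (fun _ _ => rfl) z⟩ _ (hsel S)
  obtain ⟨g', hg', hgS'⟩ := hstable S' T ⟨j, eq_update_off_of_eq_off hj z⟩ _ (hsel S')
  have hgap : ∀ a ∈ H T, ∀ b ∈ H T, L a z - L b z ≤ Δmax := fun a ha b hb => by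
    simpa [T] using (sub_le_biSup_biSup_sub (fun h => hL h (T j)) ha hb).trans (hdiam T j)
  have hgg' : |L g z - L g' z| ≤ Δmax := abs_sub_le_iff.mpr ⟨hgap g hg g' hg', hgap g' hg' g hg⟩
  calc |L (sel S) z - L (sel S') z|
      ≤ |L (sel S) z - L g z| + |L g z - L g' z| + |L g' z - L (sel S') z| :=
        (abs_sub_le _ (L g' z) _).trans (add_le_add_left (abs_sub_le _ (L g z) _) _)
    _ ≤ β + Δmax + β := by gcongr; exacts [hgS z, abs_sub_comm (L g' z) _ ▸ hgS' z]
    _ ≤ 3 * β + Δmax := by linarith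

/-- Any selector `S ↦ h_S ∈ H_S` from a `β`-uniformly stable family of data-dependent
hypothesis sets with max-diameter `Δ_max` is uniformly stable in the classical sense
with parameter `3β + Δ_max`. -/
theorem stmt14 {Z Hyp : Type*}
    (m : ℕ) (hm : 0 < m) (H : (Fin m → Z) → Set Hyp) (L : Hyp → Z → ℝ)
    (hL : ∀ h z, L h z ∈ Set.Icc (0 : ℝ) 1)
    (hne : ∀ S : Fin m → Z, (H S).Nonempty)
    (β : ℝ) (hβ : 0 ≤ β)
    (hstable : ∀ S S' : Fin m → Z, (∃ j, ∀ i, i ≠ j → S i = S' i) →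
      ∀ h ∈ H S, ∃ h' ∈ H S', ∀ z, |L h z - L h' z| ≤ β)
    (Δmax : ℝ)
    (hdiam : ∀ S : Fin m → Z, ∀ j : Fin m,
      (⨆ h' ∈ H S, ⨆ h ∈ H S, (L h' (S j) - L h (S j))) ≤ Δmax)
    (sel : (Fin m → Z) → Hyp) (hsel : ∀ S, sel S ∈ H S)
    (S S' : Fin m → Z) (hadj : ∃ j, ∀ i, i ≠ j → S i = S' i) (z : Z) :
    |L (sel S) z - L (sel S') z| ≤ 3 * β + Δmax :=
  stmt14_general m H L hL β hβ hstable Δmax hdiam sel hsel S S' hadj z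
end

section
/- Suppose for each sample S ∈ Z^m a feature mapping Φ_S : X → ℝ^N is learned, and these mappings are Δ-sensitive: for any two samples S, S' differing in exactly one point and every x ∈ X, ‖Φ_S(x) − Φ_{S'}(x)‖ ≤ Δ. Let 𝓛 be a set of γ-Lipschitz functions f : ℝ^N → ℝ, define H_S = { x ↦ f(Φ_S(x)) : f ∈ 𝓛 }, and suppose the loss ℓ is μ-Lipschitz in its first argument. Then the family (H_S)_{S∈Z^m} is β-uniformly stable with β = μ·γ·Δ. -/
open scoped NNReal

theorem LipschitzWith.abs_sub_comp_le_of_dist_le {E : Type*} [PseudoMetricSpace E]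
    {μ γ : ℝ≥0} {g : ℝ → ℝ} {f : E → ℝ} (hg : LipschitzWith μ g) (hf : LipschitzWith γ f)
    {a b : E} {Δ : ℝ} (hab : dist a b ≤ Δ) :
    |g (f a) - g (f b)| ≤ μ * γ * Δ := by
  rw [← Real.dist_eq]
  calc dist (g (f a)) (g (f b)) ≤ ↑(μ * γ) * dist a b := (hg.comp hf).dist_le_mul a b
    _ ≤ μ * γ * Δ := by push_cast; gcongr

theorem stmt17_general {X Y : Type*} (N m : ℕ) (μ γ : ℝ≥0)
    (Φ : (Fin m → X × Y) → X → EuclideanSpace ℝ (Fin N))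
    (Δ : ℝ)
    (hsens : ∀ S S' : Fin m → X × Y, (∃ j, ∀ i, i ≠ j → S i = S' i) →
      ∀ x : X, ‖Φ S x - Φ S' x‖ ≤ Δ)
    (𝓛 : Set (EuclideanSpace ℝ (Fin N) → ℝ))
    (hLip : ∀ f ∈ 𝓛, LipschitzWith γ f)
    (ℓ : ℝ → Y → ℝ)
    (hℓLip : ∀ y : Y, LipschitzWith μ fun t => ℓ t y) :
    ∀ S S' : Fin m → X × Y, (∃ j, ∀ i, i ≠ j → S i = S' i) →
      ∀ h ∈ {g : X → ℝ | ∃ f ∈ 𝓛, g = fun x => f (Φ S x)},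
        ∃ h' ∈ {g : X → ℝ | ∃ f ∈ 𝓛, g = fun x => f (Φ S' x)},
          ∀ z : X × Y, |ℓ (h z.1) z.2 - ℓ (h' z.1) z.2| ≤ (μ : ℝ) * (γ : ℝ) * Δ := by
  rintro S S' hSS' _ ⟨f, hf, rfl⟩
  refine ⟨fun x => f (Φ S' x), ⟨f, hf, rfl⟩, fun z => ?_⟩
  exact (hℓLip z.2).abs_sub_comp_le_of_dist_le (hLip f hf)
    (by rw [dist_eq_norm]; exact hsens S S' hSS' z.1)

/-- Stable representation learning: if the learned feature mappings `Φ_S : X → ℝ^N` are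
`Δ`-sensitive, the functions in `𝓛` are `γ`-Lipschitz, and the loss `ℓ` is `μ`-Lipschitz
in its first argument, then the family of hypothesis sets
`H_S = {x ↦ f (Φ_S x) : f ∈ 𝓛}` is `μγΔ`-uniformly stable. -/
theorem stmt17 {X Y : Type*} (N m : ℕ) (μ γ : ℝ≥0)
    (Φ : (Fin m → X × Y) → X → EuclideanSpace ℝ (Fin N))
    (Δ : ℝ) (hΔ : 0 ≤ Δ)
    (hsens : ∀ S S' : Fin m → X × Y, (∃ j, ∀ i, i ≠ j → S i = S' i) →
      ∀ x : X, ‖Φ S x - Φ S' x‖ ≤ Δ)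
    (𝓛 : Set (EuclideanSpace ℝ (Fin N) → ℝ))
    (hLip : ∀ f ∈ 𝓛, LipschitzWith γ f)
    (ℓ : ℝ → Y → ℝ) (hℓ : ∀ h z, ℓ h z ∈ Set.Icc (0 : ℝ) 1)
    (hℓLip : ∀ y : Y, LipschitzWith μ fun t => ℓ t y) :
    ∀ S S' : Fin m → X × Y, (∃ j, ∀ i, i ≠ j → S i = S' i) →
      ∀ h ∈ {g : X → ℝ | ∃ f ∈ 𝓛, g = fun x => f (Φ S x)},
        ∃ h' ∈ {g : X → ℝ | ∃ f ∈ 𝓛, g = fun x => f (Φ S' x)},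
          ∀ z : X × Y, |ℓ (h z.1) z.2 - ℓ (h' z.1) z.2| ≤ (μ : ℝ) * (γ : ℝ) * Δ :=
  stmt17_general N m μ γ Φ Δ hsens 𝓛 hLip ℓ hℓLip
end

section
/- Suppose for each sample S ∈ Z^m a predictor f*_S : X → ℝ is learned by a β-sensitive algorithm, i.e., ‖f*_S − f*_{S'}‖_∞ ≤ β whenever S and S' differ in exactly one point. Let H be a linear subspace of functions X → ℝ such that f*_{S'} − f*_S ∈ H for all such pairs S, S', define the distillation hypothesis sets H_S = { h ∈ H : ‖h − f*_S‖_∞ ≤ γ } for a fixed γ > 0, and suppose the loss ℓ is μ-Lipschitz in its first argument. Then the family (H_S)_{S∈Z^m} is (μ·β)-uniformly stable. -/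
open scoped NNReal

/-!
Translating a hypothesis `h ∈ H_S` by `f*_{S'} - f*_S ∈ H` gives a hypothesis in `H_{S'}`, since
the translation preserves the distance to the centre; and it moves `h` by at most `β` in sup norm,
so a `μ`-Lipschitz loss moves by at most `μ β`.
-/

def distillationSet {X : Type*} (H : Submodule ℝ (X → ℝ)) (f : X → ℝ) (γ : ℝ) : Set (X → ℝ) :=
  {g | g ∈ H ∧ ∀ x, |g x - f x| ≤ γ}

theorem add_sub_mem_distillationSet {X : Type*} {H : Submodule ℝ (X → ℝ)} {f f' h : X → ℝ}
    {γ : ℝ} (hh : h ∈ distillationSet H f γ) (hf : f' - f ∈ H) :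
    h + (f' - f) ∈ distillationSet H f' γ := by
  refine ⟨H.add_mem hh.1 hf, fun x => ?_⟩
  have hshift : h x + (f' x - f x) - f' x = h x - f x := by ring
  simpa only [Pi.add_apply, Pi.sub_apply, hshift] using hh.2 x

theorem stmt18_general {X Y : Type*} (m : ℕ) (μ : ℝ≥0) (β γ : ℝ)
    (fStar : (Fin m → X × Y) → X → ℝ)
    (hsens : ∀ S S' : Fin m → X × Y, (∃ j, ∀ i, i ≠ j → S i = S' i) →
      ∀ x : X, |fStar S x - fStar S' x| ≤ β)
    (H : Submodule ℝ (X → ℝ))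
    (hdiff : ∀ S S' : Fin m → X × Y, (∃ j, ∀ i, i ≠ j → S i = S' i) →
      (fStar S' - fStar S) ∈ H)
    (ℓ : ℝ → Y → ℝ)
    (hℓLip : ∀ y : Y, LipschitzWith μ fun t => ℓ t y) :
    ∀ S S' : Fin m → X × Y, (∃ j, ∀ i, i ≠ j → S i = S' i) →
      ∀ h ∈ {g : X → ℝ | g ∈ H ∧ ∀ x, |g x - fStar S x| ≤ γ},
        ∃ h' ∈ {g : X → ℝ | g ∈ H ∧ ∀ x, |g x - fStar S' x| ≤ γ},
          ∀ z : X × Y, |ℓ (h z.1) z.2 - ℓ (h' z.1) z.2| ≤ (μ : ℝ) * β := by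
  intro S S' hadj h hh
  refine ⟨h + (fStar S' - fStar S),
    add_sub_mem_distillationSet (f := fStar S) hh (hdiff S S' hadj), fun ⟨x, y⟩ => ?_⟩
  have hmove : dist (h x) ((h + (fStar S' - fStar S)) x) ≤ β := by
    simpa only [Real.dist_eq, Pi.add_apply, Pi.sub_apply, sub_add_cancel_left, abs_neg,
      abs_sub_comm] using hsens S S' hadj x
  simpa only [Real.dist_eq] using (hℓLip y).dist_le_mul_of_le hmove

/-- Distillation: if the first-stage predictors `f*_S` are `β`-sensitive in sup norm
(encoded pointwise), `H` is a linear subspace of functions containing all differences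
`f*_{S'} - f*_S` for adjacent samples, `H_S = {h ∈ H : ‖h - f*_S‖_∞ ≤ γ}` (sup norm
encoded pointwise), and the loss `ℓ` is `μ`-Lipschitz in its first argument, then the
family `(H_S)` is `μβ`-uniformly stable. -/
theorem stmt18 {X Y : Type*} (m : ℕ) (μ : ℝ≥0) (β γ : ℝ) (hβ : 0 ≤ β) (hγ : 0 < γ)
    (fStar : (Fin m → X × Y) → X → ℝ)
    (hsens : ∀ S S' : Fin m → X × Y, (∃ j, ∀ i, i ≠ j → S i = S' i) →
      ∀ x : X, |fStar S x - fStar S' x| ≤ β)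
    (H : Submodule ℝ (X → ℝ))
    (hdiff : ∀ S S' : Fin m → X × Y, (∃ j, ∀ i, i ≠ j → S i = S' i) →
      (fStar S' - fStar S) ∈ H)
    (ℓ : ℝ → Y → ℝ) (hℓ : ∀ h z, ℓ h z ∈ Set.Icc (0 : ℝ) 1)
    (hℓLip : ∀ y : Y, LipschitzWith μ fun t => ℓ t y) :
    ∀ S S' : Fin m → X × Y, (∃ j, ∀ i, i ≠ j → S i = S' i) →
      ∀ h ∈ {g : X → ℝ | g ∈ H ∧ ∀ x, |g x - fStar S x| ≤ γ},
        ∃ h' ∈ {g : X → ℝ | g ∈ H ∧ ∀ x, |g x - fStar S' x| ≤ γ},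
          ∀ z : X × Y, |ℓ (h z.1) z.2 - ℓ (h' z.1) z.2| ≤ (μ : ℝ) * β :=
  stmt18_general m μ β γ fStar hsens H hdiff ℓ hℓLip
end

section
/- Let A be a learning algorithm mapping samples of size p to real-valued predictors that is β_A-uniformly stable in its output: for any two samples B, B' of size p differing in exactly one point and every x, |A(B)(x) − A(B')(x)| ≤ β_A. Fix k index lists I_1,...,I_k, each of p indices from [m], and suppose a given index j ∈ [m] appears in at most t of the lists. Let S, S' ∈ Z^m be two samples that differ only at index j, let B_i and B'_i denote the subsamples of S and S' induced by I_i, let w ∈ ℝ^k be a vector of nonnegative mixing weights summing to 1 with w_i ≤ C/k for all i, and suppose the loss ℓ is μ-Lipschitz in the prediction. Then for every z ∈ Z, | L(Σ_{i=1}^k w_i·A(B_i), z) − L(Σ_{i=1}^k w_i·A(B'_i), z) | ≤ (t/k)·C·μ·β_A. -/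
open Finset
open scoped NNReal

/-! Changing the sample at index `j` changes only the base predictors whose index list contains
`j`, and each of those (the lists having no repeated index) by replacing a single training point,
hence by at most `β_A`. At most `t` of them are affected, each with weight at most `C/k`, so the
aggregate prediction moves by at most `(t/k) C β_A`, and the `μ`-Lipschitz loss by `μ` times that. -/

lemma abs_sum_mul_sub_sum_mul_le {ι : Type*} [Fintype ι] (s : Finset ι) {w f g : ι → ℝ}
    {c β : ℝ} (hw0 : ∀ i, 0 ≤ w i) (hwc : ∀ i, w i ≤ c)
    (hout : ∀ i ∉ s, f i = g i) (hin : ∀ i ∈ s, |f i - g i| ≤ β) :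
    |∑ i, w i * f i - ∑ i, w i * g i| ≤ #s * c * β := by
  have hsupp : ∑ i ∈ s, w i * (f i - g i) = ∑ i, w i * (f i - g i) :=
    sum_subset (subset_univ s) fun i _ hi => by rw [hout i hi, sub_self, mul_zero]
  calc |∑ i, w i * f i - ∑ i, w i * g i|
      = |∑ i ∈ s, w i * (f i - g i)| := by rw [hsupp, ← sum_sub_distrib]; simp only [mul_sub]
    _ ≤ ∑ i ∈ s, w i * |f i - g i| := by
        refine (abs_sum_le_sum_abs _ _).trans_eq (sum_congr rfl fun i _ => ?_)
        rw [abs_mul, abs_of_nonneg (hw0 i)]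
    _ ≤ ∑ _i ∈ s, c * β := sum_le_sum fun i hi =>
        mul_le_mul (hwc i) (hin i hi) (abs_nonneg _) ((hw0 i).trans (hwc i))
    _ = #s * c * β := by rw [sum_const, nsmul_eq_mul, mul_assoc]

section Subsample

variable {α β γ : Type*} {S S' : α → β} {I : γ → α} {j : α}

lemma comp_eq_of_forall_ne (hdiff : ∀ i, i ≠ j → S i = S' i) (hj : ¬∃ a, I a = j) :
    (fun a => S (I a)) = fun a => S' (I a) :=
  funext fun a => hdiff _ fun h => hj ⟨a, h⟩

lemma comp_eq_off_of_injective (hinj : Function.Injective I)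
    (hdiff : ∀ i, i ≠ j → S i = S' i) {a : γ} (ha : I a = j) :
    ∀ b, b ≠ a → S (I b) = S' (I b) :=
  fun _ hb => hdiff _ fun h => hb (hinj (h.trans ha.symm))

end Subsample

theorem stmt19_general {X Y : Type*} (m p k : ℕ) (μ : ℝ≥0) (βA C : ℝ)
    (hβA : 0 ≤ βA) (hC : 1 ≤ C)
    (A : (Fin p → X × Y) → X → ℝ)
    (hstab : ∀ B B' : Fin p → X × Y, (∃ a, ∀ b, b ≠ a → B b = B' b) →
      ∀ x : X, |A B x - A B' x| ≤ βA)
    (I : Fin k → Fin p → Fin m) (hinj : ∀ i, Function.Injective (I i))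
    (j : Fin m) (t : ℕ)
    (ht : (Finset.univ.filter fun i : Fin k => ∃ a, I i a = j).card ≤ t)
    (S S' : Fin m → X × Y) (hdiff : ∀ i, i ≠ j → S i = S' i)
    (w : Fin k → ℝ) (hw0 : ∀ i, 0 ≤ w i)
    (hwC : ∀ i, w i ≤ C / k)
    (ℓ : ℝ → Y → ℝ)
    (hℓLip : ∀ y : Y, LipschitzWith μ fun s => ℓ s y)
    (z : X × Y) :
    |ℓ (∑ i, w i * A (fun a => S (I i a)) z.1) z.2
        - ℓ (∑ i, w i * A (fun a => S' (I i a)) z.1) z.2|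
      ≤ ((t : ℝ) / k) * C * (μ : ℝ) * βA := by
  set F := univ.filter fun i : Fin k => ∃ a, I i a = j
  have hpred : |∑ i, w i * A (fun a => S (I i a)) z.1 - ∑ i, w i * A (fun a => S' (I i a)) z.1|
      ≤ #F * (C / k) * βA := by
    refine abs_sum_mul_sub_sum_mul_le F hw0 hwC (fun i hi => ?_) (fun i hi => ?_)
    · rw [comp_eq_of_forall_ne hdiff (by simpa [F] using hi)]
    · obtain ⟨a, ha⟩ : ∃ a, I i a = j := by simpa [F] using hi
      exact hstab _ _ ⟨a, comp_eq_off_of_injective (hinj i) hdiff ha⟩ z.1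
  have hCk : 0 ≤ C / k := by positivity
  calc _ ≤ (μ : ℝ) * |∑ i, w i * A (fun a => S (I i a)) z.1
          - ∑ i, w i * A (fun a => S' (I i a)) z.1| := by
        simpa only [Real.dist_eq] using (hℓLip z.2).dist_le_mul _ _
    _ ≤ μ * (#F * (C / k) * βA) := by gcongr
    _ ≤ μ * (t * (C / k) * βA) := by gcongr
    _ = ((t : ℝ) / k) * C * (μ : ℝ) * βA := by ring

/-- Hypothesis set stability of bagging: if the base algorithm `A` is `β_A`-uniformly
stable in its output, the index lists `I_1, …, I_k` (each of `p` distinct indices from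
`[m]`, i.e. subsamples drawn without replacement) contain a given index `j` in at most
`t` lists, the mixing weights `w` lie in the simplex with `w_i ≤ C/k`, and the loss `ℓ`
is `μ`-Lipschitz in the prediction, then for samples `S, S'` differing only at index `j`,
the losses of the aggregated predictors differ by at most `(t/k) C μ β_A` at any point. -/
theorem stmt19 {X Y : Type*} (m p k : ℕ) (hk : 0 < k) (μ : ℝ≥0) (βA C : ℝ)
    (hβA : 0 ≤ βA) (hC : 1 ≤ C)
    (A : (Fin p → X × Y) → X → ℝ)
    (hstab : ∀ B B' : Fin p → X × Y, (∃ a, ∀ b, b ≠ a → B b = B' b) →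
      ∀ x : X, |A B x - A B' x| ≤ βA)
    (I : Fin k → Fin p → Fin m) (hinj : ∀ i, Function.Injective (I i))
    (j : Fin m) (t : ℕ)
    (ht : (Finset.univ.filter fun i : Fin k => ∃ a, I i a = j).card ≤ t)
    (S S' : Fin m → X × Y) (hdiff : ∀ i, i ≠ j → S i = S' i)
    (w : Fin k → ℝ) (hw0 : ∀ i, 0 ≤ w i) (hw1 : ∑ i, w i = 1)
    (hwC : ∀ i, w i ≤ C / k)
    (ℓ : ℝ → Y → ℝ) (hℓ : ∀ s z, ℓ s z ∈ Set.Icc (0 : ℝ) 1)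
    (hℓLip : ∀ y : Y, LipschitzWith μ fun s => ℓ s y)
    (z : X × Y) :
    |ℓ (∑ i, w i * A (fun a => S (I i a)) z.1) z.2
        - ℓ (∑ i, w i * A (fun a => S' (I i a)) z.1) z.2|
      ≤ ((t : ℝ) / k) * C * (μ : ℝ) * βA :=
  stmt19_general m p k μ βA C hβA hC A hstab I hinj j t ht S S' hdiff w hw0 hwC ℓ hℓLip z
end
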